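/- arXiv:1805.03192 — 4 statements merged into one kernel-verified Lean document; each statement's English description precedes it below -/
import Mathlib

section
/- Let V be a finite subset of ℤ² and G(V) the square grid graph on V. Any closed walk in G(V) that turns at every vertex and traverses no edge more than once visits each vertex at most twice. -/
/-- Two points of `ℤ × ℤ` are adjacent in the (full) square grid graph iff they are
at Euclidean distance 1, i.e. they agree in one coordinate and differ by 1 in the other. -/
def GridAdj (u v : ℤ × ℤ) : Prop :=
  (u.1 = v.1 ∧ (u.2 - v.2 = 1 ∨ v.2 - u.2 = 1)) ∨
  (u.2 = v.2 ∧ (u.1 - v.1 = 1 ∨ v.1 - u.1 = 1))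

instance : DecidableRel GridAdj := fun u v => by
  unfold GridAdj; infer_instance

/-- Degree of a vertex `v` in the square grid graph `G(V)` induced by `V ⊆ ℤ²`. -/
def gridDegree (V : Finset (ℤ × ℤ)) (v : ℤ × ℤ) : ℕ :=
  (V.filter (fun w => GridAdj v w)).card

/-- A closed walk in the square grid graph `G(V)`: a cyclic sequence of `n > 0` vertices
of `V`, consecutive ones (cyclically) adjacent in the grid. -/
structure GridClosedWalk (V : Finset (ℤ × ℤ)) where
  n : ℕ
  npos : 0 < n
  c : ZMod n → ℤ × ℤ
  mem : ∀ i, c i ∈ V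
  adj : ∀ i, GridAdj (c i) (c (i + 1))

/-- The edge from `u` to `v` is horizontal (its endpoints differ in the first coordinate). -/
def Horizontal (u v : ℤ × ℤ) : Prop := u.2 = v.2

/-- The edges `uv` and `vw` are perpendicular: one is horizontal and the other vertical. -/
def Perp (u v w : ℤ × ℤ) : Prop :=
  (u.2 = v.2 ∧ v.1 = w.1) ∨ (u.1 = v.1 ∧ v.2 = w.2)

/-- A closed walk turns at every vertex: every pair of (cyclically) consecutive edges
is perpendicular. -/
def GridClosedWalk.Turning {V : Finset (ℤ × ℤ)} (W : GridClosedWalk V) : Prop :=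
  ∀ i : ZMod W.n, Perp (W.c i) (W.c (i + 1)) (W.c (i + 2))

/-- A closed walk traverses no edge more than once. -/
def GridClosedWalk.Trail {V : Finset (ℤ × ℤ)} (W : GridClosedWalk V) : Prop :=
  ∀ i j : ZMod W.n, s(W.c i, W.c (i + 1)) = s(W.c j, W.c (j + 1)) → i = j

/-- The number of times a closed walk visits the vertex `v`. -/
def GridClosedWalk.visits {V : Finset (ℤ × ℤ)} (W : GridClosedWalk V) (v : ℤ × ℤ) : ℕ :=
  haveI : NeZero W.n := ⟨W.npos.ne'⟩
  (Finset.univ.filter (fun i : ZMod W.n => W.c i = v)).card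

/-- The set of (undirected) edges traversed by a closed walk. -/
def GridClosedWalk.Edges {V : Finset (ℤ × ℤ)} (W : GridClosedWalk V) : Set (Sym2 (ℤ × ℤ)) :=
  {e | ∃ i : ZMod W.n, e = s(W.c i, W.c (i + 1))}

/-- A double turning Hamiltonian cycle of `G(V)`: a closed walk that visits every vertex of
`V` at least once, traverses no edge more than once, and turns at every vertex. -/
def DoubleTurningHC {V : Finset (ℤ × ℤ)} (W : GridClosedWalk V) : Prop :=
  (∀ v ∈ V, 1 ≤ W.visits v) ∧ W.Trail ∧ W.Turning

/-- `p` is the lower-left corner of a pixel of `V`: all four corners of the unit square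
`[p.1, p.1+1] × [p.2, p.2+1]` lie in `V`. -/
def Pixel (V : Finset (ℤ × ℤ)) (p : ℤ × ℤ) : Prop :=
  p ∈ V ∧ (p.1 + 1, p.2) ∈ V ∧ (p.1, p.2 + 1) ∈ V ∧ (p.1 + 1, p.2 + 1) ∈ V

/-- The four corners of the pixel with lower-left corner `p`. -/
def pixelCorners (p : ℤ × ℤ) : Set (ℤ × ℤ) :=
  {p, (p.1 + 1, p.2), (p.1, p.2 + 1), (p.1 + 1, p.2 + 1)}

/-- The four side edges of the pixel with lower-left corner `p`. -/
def pixelSides (p : ℤ × ℤ) : Set (Sym2 (ℤ × ℤ)) :=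
  { s(p, ((p.1 + 1, p.2) : ℤ × ℤ)), s(p, ((p.1, p.2 + 1) : ℤ × ℤ)),
    s(((p.1 + 1, p.2) : ℤ × ℤ), ((p.1 + 1, p.2 + 1) : ℤ × ℤ)),
    s(((p.1, p.2 + 1) : ℤ × ℤ), ((p.1 + 1, p.2 + 1) : ℤ × ℤ)) }

/-- `V` is solid: the complement `ℤ² \ V`, with the distance-1 adjacency, has no finite
connected component (the component of every point outside `V` is infinite). -/
def Solid (V : Finset (ℤ × ℤ)) : Prop :=
  ∀ v : ℤ × ℤ, v ∉ V →
    {w : ℤ × ℤ | Relation.ReflTransGen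
      (fun a b => GridAdj a b ∧ a ∉ V ∧ b ∉ V) v w}.Infinite

/-- An `ε`-pixel of `V`: a pixel whose lower-left corner `(i, j)` satisfies `i + j ≡ ε (mod 2)`. -/
def EpsPixel (V : Finset (ℤ × ℤ)) (ε : ZMod 2) (p : ℤ × ℤ) : Prop :=
  Pixel V p ∧ ((p.1 + p.2 : ℤ) : ZMod 2) = ε

/-- The `ε`-checkering graph of `V`: vertices are the `ε`-pixels of `V`, two distinct
`ε`-pixels being adjacent when they share a common corner. -/
def checkeringGraph (V : Finset (ℤ × ℤ)) (ε : ZMod 2) :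
    SimpleGraph {p : ℤ × ℤ // EpsPixel V ε p} where
  Adj a b := a ≠ b ∧ ∃ v, v ∈ pixelCorners a.1 ∧ v ∈ pixelCorners b.1
  symm := ⟨fun a b ⟨hne, v, h1, h2⟩ => ⟨hne.symm, v, h2, h1⟩⟩
  loopless := ⟨fun a h => h.1 rfl⟩

lemma GridAdj.symm' {u w : ℤ × ℤ} (h : GridAdj u w) : GridAdj w u := by
  unfold GridAdj at *; tauto

/-- Any closed walk in `G(V)` that turns at every vertex and traverses no
edge more than once visits each vertex at most twice. -/
theorem turning_trail_visits_le_two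
    (V : Finset (ℤ × ℤ)) (W : GridClosedWalk V) (hT : W.Turning) (htr : W.Trail) :
    ∀ v : ℤ × ℤ, W.visits v ≤ 2 := by
  intro v
  haveI : NeZero W.n := ⟨W.npos.ne'⟩
  classical
  show (Finset.univ.filter (fun i : ZMod W.n => W.c i = v)).card ≤ 2
  set A := Finset.univ.filter (fun i : ZMod W.n => W.c i = v) with hA
  set B := Finset.univ.filter (fun i : ZMod W.n => W.c (i+1) = v) with hB
  have hnoloop : ∀ i : ZMod W.n, ¬ (W.c i = v ∧ W.c (i+1) = v) := by
    rintro i ⟨h1, h2⟩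
    have h := W.adj i
    rw [h1, h2] at h
    rcases h with ⟨_, h⟩ | ⟨_, h⟩ <;> omega
  have hdisj : Disjoint A B := by
    rw [Finset.disjoint_left]
    intro i hiA hiB
    simp only [hA, hB, Finset.mem_filter] at hiA hiB
    exact hnoloop i ⟨hiA.2, hiB.2⟩
  have hcardB : B.card = A.card := by
    apply Finset.card_bij (fun i _ => i + 1)
    · intro i hi
      simp only [hB, Finset.mem_filter] at hi
      simp [hA, hi.2]
    · intro i _ j _ h
      exact add_right_cancel h
    · intro j hj
      refine ⟨j - 1, ?_, by ring⟩
      simp only [hA, Finset.mem_filter] at hj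
      simp [hB, sub_add_cancel, hj.2]
  set N : Finset (ℤ × ℤ) := {(v.1+1, v.2), (v.1-1, v.2), (v.1, v.2+1), (v.1, v.2-1)} with hN
  have hNmem : ∀ w, GridAdj v w → w ∈ N := by
    intro w h
    have h1 : (w = (v.1+1, v.2) ∨ w = (v.1-1, v.2)) ∨ w = (v.1, v.2+1) ∨ w = (v.1, v.2-1) := by
      rcases h with ⟨h1, h2 | h2⟩ | ⟨h1, h2 | h2⟩ <;>
        simp only [Prod.ext_iff] <;> omega
    simp only [hN, Finset.mem_insert, Finset.mem_singleton]
    tauto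
  -- the "other endpoint" map
  set f : ZMod W.n → ℤ × ℤ := fun i => if W.c i = v then W.c (i+1) else W.c i with hf
  have hedge : ∀ i ∈ A ∪ B, s(W.c i, W.c (i+1)) = s(v, f i) ∧ GridAdj v (f i) := by
    intro i hi
    rcases Finset.mem_union.mp hi with hi | hi
    · simp only [hA, Finset.mem_filter] at hi
      have h1 : W.c i = v := hi.2
      have hfi : f i = W.c (i+1) := by simp [hf, h1]
      refine ⟨by rw [h1, hfi], ?_⟩
      rw [hfi, ← h1]; exact W.adj i
    · simp only [hB, Finset.mem_filter] at hi
      have h2 : W.c (i+1) = v := hi.2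
      have h1 : W.c i ≠ v := fun h => hnoloop i ⟨h, h2⟩
      have hfi : f i = W.c i := by simp [hf, h1]
      refine ⟨by rw [h2, hfi, Sym2.eq_swap], ?_⟩
      rw [hfi, ← h2]; exact (W.adj i).symm'
  have hcard : (A ∪ B).card ≤ N.card := by
    apply Finset.card_le_card_of_injOn f
    · intro i hi; exact hNmem _ (hedge i hi).2
    · intro i hi j hj hij
      apply htr
      rw [(hedge i hi).1, (hedge j hj).1, hij]
  have hN4 : N.card ≤ 4 := by
    refine le_trans (Finset.card_insert_le _ _) (Nat.succ_le_succ ?_)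
    refine le_trans (Finset.card_insert_le _ _) (Nat.succ_le_succ ?_)
    refine le_trans (Finset.card_insert_le _ _) (Nat.succ_le_succ ?_)
    simp
  have := Finset.card_union_of_disjoint hdisj
  omega
end

section
/- Let V be a finite solid subset of ℤ², let C be a double turning Hamiltonian cycle of the square grid graph G(V), and let P be a pixel of V none of whose four side edges is traversed by C. Then G(V) admits a double turning Hamiltonian cycle whose set of traversed edges is the union of the set of edges traversed by C and the four side edges of P. -/
/- ======================= Auxiliary material for the proof ======================= -/

lemma gridAdj_irrefl (u : ℤ × ℤ) : ¬ GridAdj u u := by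
  unfold GridAdj; omega

/-- The cyclic sequence obtained by opening the walk `W` at `i0` and prepending the
four corners `q0, q1, q2, q3` of a pixel. Index `0,1,2,3 ↦ q0,q1,q2,q3`;
index `r ≥ 4 ↦ W.c (i0 + (r-4))`. -/
def auxG {V : Finset (ℤ × ℤ)} (W : GridClosedWalk V) (i0 : ZMod W.n)
    (q0 q1 q2 q3 : ℤ × ℤ) (r : ℕ) : ℤ × ℤ :=
  if r = 0 then q0 else if r = 1 then q1 else if r = 2 then q2 else if r = 3 then q3
  else W.c (i0 + ((r - 4 : ℕ) : ZMod W.n))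

lemma build_aux (V : Finset (ℤ × ℤ)) (W : GridClosedWalk V)
    (hvis : ∀ v ∈ V, 1 ≤ W.visits v) (htrail : W.Trail) (hturn : W.Turning)
    (p : ℤ × ℤ) (hfree : ∀ e ∈ pixelSides p, e ∉ W.Edges)
    (i0 : ZMod W.n) (q0 q1 q2 q3 : ℤ × ℤ)
    (hq0 : W.c i0 = q0)
    (hm1 : q1 ∈ V) (hm2 : q2 ∈ V) (hm3 : q3 ∈ V)
    (hp012 : Perp q0 q1 q2) (hp123 : Perp q1 q2 q3) (hp230 : Perp q2 q3 q0)
    (hp3 : Perp q3 q0 (W.c (i0 + 1))) (hpIn : Perp (W.c (i0 - 1)) q0 q1)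
    (ha01 : GridAdj q0 q1) (ha12 : GridAdj q1 q2) (ha23 : GridAdj q2 q3) (ha30 : GridAdj q3 q0)
    (hsides : pixelSides p = {s(q0,q1), s(q1,q2), s(q2,q3), s(q3,q0)})
    (hd1 : s(q0,q1) ≠ s(q1,q2)) (hd2 : s(q0,q1) ≠ s(q2,q3)) (hd3 : s(q0,q1) ≠ s(q3,q0))
    (hd4 : s(q1,q2) ≠ s(q2,q3)) (hd5 : s(q1,q2) ≠ s(q3,q0)) (hd6 : s(q2,q3) ≠ s(q3,q0)) :
    ∃ W' : GridClosedWalk V, DoubleTurningHC W' ∧ W'.Edges = W.Edges ∪ pixelSides p := by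
  haveI : NeZero W.n := ⟨W.npos.ne'⟩
  -- W.n ≥ 2
  have hn1 : W.n ≠ 1 := by
    intro h
    have h2 := W.adj 0
    haveI : Subsingleton (ZMod W.n) := by rw [h]; infer_instance
    rw [Subsingleton.elim ((0 : ZMod W.n) + 1) 0] at h2
    exact gridAdj_irrefl _ h2
  have hn2 : 2 ≤ W.n := by have := W.npos; omega
  set N := W.n + 4 with hNdef
  haveI : NeZero N := ⟨by omega⟩
  haveI : Fact (1 < N) := ⟨by omega⟩
  set g := auxG W i0 q0 q1 q2 q3 with hgdef
  have hg0 : g 0 = q0 := rfl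
  have hg1 : g 1 = q1 := rfl
  have hg2 : g 2 = q2 := rfl
  have hg3 : g 3 = q3 := rfl
  have hgW : ∀ r : ℕ, 4 ≤ r → g r = W.c (i0 + ((r - 4 : ℕ) : ZMod W.n)) := by
    intro r hr
    rw [hgdef]
    unfold auxG
    rw [if_neg (by omega), if_neg (by omega), if_neg (by omega), if_neg (by omega)]
  have hg4 : g 4 = q0 := by rw [hgW 4 le_rfl]; simpa using hq0
  have hg5 : g 5 = W.c (i0 + 1) := by rw [hgW 5 (by omega)]; norm_num
  have hcast : ∀ r : ℕ, 4 ≤ r → ((r - 3 : ℕ) : ZMod W.n) = ((r - 4 : ℕ) : ZMod W.n) + 1 := by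
    intro r hr
    rw [show r - 3 = (r - 4) + 1 by omega, Nat.cast_add, Nat.cast_one]
  have hwrap : ((W.n - 1 : ℕ) : ZMod W.n) = -1 := by
    have h : ((W.n - 1 : ℕ) : ZMod W.n) + 1 = 0 := by
      have h2 : (((W.n - 1) + 1 : ℕ) : ZMod W.n) = 0 := by
        rw [show W.n - 1 + 1 = W.n by omega]; exact ZMod.natCast_self _
      rwa [Nat.cast_add, Nat.cast_one] at h2
    exact eq_neg_of_add_eq_zero_left h
  have hends : ∀ r : ℕ, 4 ≤ r → r < N →
      g ((r + 1) % N) = W.c ((i0 + ((r - 4 : ℕ) : ZMod W.n)) + 1) := by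
    intro r hr hrN
    rcases Nat.lt_or_ge (r + 1) N with h | h
    · rw [Nat.mod_eq_of_lt h, hgW (r + 1) (by omega), show r + 1 - 4 = r - 3 by omega,
        hcast r hr, ← add_assoc]
    · have hN' : r + 1 = N := by omega
      rw [hN', Nat.mod_self, hg0, show r - 4 = W.n - 1 by omega, hwrap,
        show i0 + -1 + 1 = i0 by ring, hq0]
  have hEW : ∀ r : ℕ, 4 ≤ r → r < N →
      s(g r, g ((r + 1) % N)) =
        s(W.c (i0 + ((r - 4 : ℕ) : ZMod W.n)), W.c ((i0 + ((r - 4 : ℕ) : ZMod W.n)) + 1)) := by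
    intro r hr hrN
    rw [hgW r hr, hends r hr hrN]
  have hmemg : ∀ r : ℕ, r < N → g r ∈ V := by
    intro r hrN
    rcases Nat.lt_or_ge r 4 with h4 | h4
    · interval_cases r
      · rw [hg0, ← hq0]; exact W.mem i0
      · rw [hg1]; exact hm1
      · rw [hg2]; exact hm2
      · rw [hg3]; exact hm3
    · rw [hgW r h4]; exact W.mem _
  have hAdj0 : ∀ r : ℕ, r < N → GridAdj (g r) (g ((r + 1) % N)) := by
    intro r hrN
    rcases Nat.lt_or_ge r 4 with h4 | h4
    · have h1 : (r + 1) % N = r + 1 := Nat.mod_eq_of_lt (by omega)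
      rw [h1]
      interval_cases r
      · rw [hg0, hg1]; exact ha01
      · rw [hg1, hg2]; exact ha12
      · rw [hg2, hg3]; exact ha23
      · rw [hg3, hg4]; exact ha30
    · rw [hgW r h4, hends r h4 hrN]; exact W.adj _
  have hPerp0 : ∀ r : ℕ, r < N → Perp (g r) (g ((r + 1) % N)) (g ((r + 2) % N)) := by
    intro r hrN
    rcases Nat.lt_or_ge r 4 with h4 | h4
    · have h1 : (r + 1) % N = r + 1 := Nat.mod_eq_of_lt (by omega)
      have h2 : (r + 2) % N = r + 2 := Nat.mod_eq_of_lt (by omega)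
      rw [h1, h2]
      interval_cases r
      · rw [hg0, hg1, hg2]; exact hp012
      · rw [hg1, hg2, hg3]; exact hp123
      · rw [hg2, hg3, hg4]; exact hp230
      · rw [hg3, hg4, hg5]; exact hp3
    · rcases Nat.lt_or_ge (r + 2) N with h | h
      · rw [hgW r h4, hends r h4 hrN]
        have h3 : g ((r + 2) % N) = W.c (i0 + ((r - 4 : ℕ) : ZMod W.n) + 1 + 1) := by
          rw [Nat.mod_eq_of_lt h, hgW (r + 2) (by omega),
            show r + 2 - 4 = (r - 3) + 1 by omega, Nat.cast_add, Nat.cast_one, hcast r h4,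
            ← add_assoc, ← add_assoc]
        rw [h3]
        have := hturn (i0 + ((r - 4 : ℕ) : ZMod W.n))
        rwa [show (i0 + ((r - 4 : ℕ) : ZMod W.n)) + 2 =
          i0 + ((r - 4 : ℕ) : ZMod W.n) + 1 + 1 by ring] at this
      · rcases Nat.lt_or_ge (r + 1) N with h' | h'
        · -- r + 2 = N
          rw [hgW r h4, hends r h4 hrN]
          have h3 : g ((r + 2) % N) = W.c (i0 + ((r - 4 : ℕ) : ZMod W.n) + 1 + 1) := by
            have hz : (r + 2) % N = 0 := by rw [show r + 2 = N by omega, Nat.mod_self]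
            rw [hz, hg0, ← hq0]
            congr 1
            have hx : ((r - 4 : ℕ) : ZMod W.n) + 1 + 1 = 0 := by
              rw [show (1 : ZMod W.n) = ((1 : ℕ) : ZMod W.n) by rw [Nat.cast_one],
                ← Nat.cast_add, ← Nat.cast_add,
                show r - 4 + 1 + 1 = W.n by omega, ZMod.natCast_self]
            rw [add_assoc, add_assoc, ← add_assoc ((r - 4 : ℕ) : ZMod W.n), hx, add_zero]
          rw [h3]
          have := hturn (i0 + ((r - 4 : ℕ) : ZMod W.n))
          rwa [show (i0 + ((r - 4 : ℕ) : ZMod W.n)) + 2 =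
            i0 + ((r - 4 : ℕ) : ZMod W.n) + 1 + 1 by ring] at this
        · -- r + 1 = N
          have h1 : (r + 1) % N = 0 := by rw [show r + 1 = N by omega, Nat.mod_self]
          have h2 : (r + 2) % N = 1 := by
            rw [show r + 2 = N + 1 by omega, Nat.add_mod_left, Nat.mod_eq_of_lt (by omega)]
          rw [h1, h2, hg0, hg1, hgW r h4, show r - 4 = W.n - 1 by omega, hwrap,
            show i0 + -1 = i0 - 1 by ring]
          exact hpIn
  -- the four new edges, in the form they will appear
  have hE0 : s(g 0, g ((0 + 1) % N)) = s(q0, q1) := by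
    show s(g 0, g (1 % N)) = _
    rw [Nat.mod_eq_of_lt (by omega), hg0, hg1]
  have hE1 : s(g 1, g ((1 + 1) % N)) = s(q1, q2) := by
    show s(g 1, g (2 % N)) = _
    rw [Nat.mod_eq_of_lt (by omega), hg1, hg2]
  have hE2 : s(g 2, g ((2 + 1) % N)) = s(q2, q3) := by
    show s(g 2, g (3 % N)) = _
    rw [Nat.mod_eq_of_lt (by omega), hg2, hg3]
  have hE3 : s(g 3, g ((3 + 1) % N)) = s(q3, q0) := by
    show s(g 3, g (4 % N)) = _
    rw [Nat.mod_eq_of_lt (by omega), hg3, hg4]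
  have hside : ∀ t : ℕ, t < 4 → s(g t, g ((t + 1) % N)) ∈ pixelSides p := by
    intro t ht
    rw [hsides]
    interval_cases t
    · rw [hE0]; exact Set.mem_insert _ _
    · rw [hE1]; simp
    · rw [hE2]; simp
    · rw [hE3]; simp
  have hinj : ∀ r s : ℕ, r < N → s < N →
      s(g r, g ((r + 1) % N)) = s(g s, g ((s + 1) % N)) → r = s := by
    intro r s hr hs h
    rcases Nat.lt_or_ge r 4 with h4r | h4r <;> rcases Nat.lt_or_ge s 4 with h4s | h4s
    · interval_cases r <;> interval_cases s <;>
        simp only [hE0, hE1, hE2, hE3] at h <;>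
        first
          | rfl
          | exact absurd h hd1 | exact absurd h hd2 | exact absurd h hd3
          | exact absurd h hd4 | exact absurd h hd5 | exact absurd h hd6
          | exact absurd h.symm hd1 | exact absurd h.symm hd2 | exact absurd h.symm hd3
          | exact absurd h.symm hd4 | exact absurd h.symm hd5 | exact absurd h.symm hd6
    · exfalso
      have hs2 : s(g s, g ((s + 1) % N)) ∈ GridClosedWalk.Edges W := by
        rw [hEW s h4s hs]; exact ⟨_, rfl⟩
      have hr2 := hside r h4r
      rw [h] at hr2
      exact hfree _ hr2 hs2
    · exfalso
      have hr2 : s(g r, g ((r + 1) % N)) ∈ GridClosedWalk.Edges W := by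
        rw [hEW r h4r hr]; exact ⟨_, rfl⟩
      have hs2 := hside s h4s
      rw [← h] at hs2
      exact hfree _ hs2 hr2
    · rw [hEW r h4r hr, hEW s h4s hs] at h
      have h2 := htrail _ _ h
      have h3 : ((r - 4 : ℕ) : ZMod W.n) = ((s - 4 : ℕ) : ZMod W.n) := by
        exact add_left_cancel h2
      have h4 := congrArg ZMod.val h3
      rw [ZMod.val_natCast, ZMod.val_natCast, Nat.mod_eq_of_lt (by omega),
        Nat.mod_eq_of_lt (by omega)] at h4
      omega
  -- index arithmetic for the new walk
  have hv1 : ∀ k : ZMod N, (k + 1).val = (k.val + 1) % N := by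
    intro k; rw [ZMod.val_add, ZMod.val_one]
  have hvN : ∀ t : ℕ, t < N → ((t : ZMod N)).val = t := by
    intro t ht; rw [ZMod.val_natCast, Nat.mod_eq_of_lt ht]
  have hv2 : ∀ k : ZMod N, (k + 2).val = (k.val + 2) % N := by
    intro k
    have h2 : ((2 : ZMod N)).val = 2 := by
      rw [show (2 : ZMod N) = ((2 : ℕ) : ZMod N) by norm_cast]; exact hvN 2 (by omega)
    rw [ZMod.val_add, h2]
  refine ⟨⟨N, by omega, fun k => g k.val, fun k => hmemg k.val (ZMod.val_lt k), ?_⟩,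
    ⟨?_, ?_, ?_⟩, ?_⟩
  · -- adjacency
    intro k
    have h := hAdj0 k.val (ZMod.val_lt k)
    rwa [← hv1 k] at h
  · -- visits
    intro v hv
    have h1 := hvis v hv
    unfold GridClosedWalk.visits at h1 ⊢
    obtain ⟨i, hi⟩ := Finset.card_pos.mp h1
    have hci : W.c i = v := (Finset.mem_filter.mp hi).2
    apply Finset.card_pos.mpr
    refine ⟨(((4 + (i - i0).val : ℕ)) : ZMod N), Finset.mem_filter.mpr ⟨Finset.mem_univ _, ?_⟩⟩
    have hj : (i - i0).val < W.n := ZMod.val_lt _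
    show g ((((4 + (i - i0).val : ℕ)) : ZMod N)).val = v
    rw [hvN _ (by omega), hgW _ (by omega), show 4 + (i - i0).val - 4 = (i - i0).val by omega,
      ZMod.natCast_zmod_val, show i0 + (i - i0) = i by ring]
    exact hci
  · -- trail
    intro i j h
    have hval : i.val = j.val := by
      apply hinj i.val j.val (ZMod.val_lt i) (ZMod.val_lt j)
      rw [← hv1 i, ← hv1 j]
      exact h
    exact ZMod.val_injective N hval
  · -- turning
    intro k
    have h := hPerp0 k.val (ZMod.val_lt k)
    rwa [← hv1 k, ← hv2 k] at h
  · -- edges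
    ext e
    simp only [GridClosedWalk.Edges, Set.mem_setOf_eq, Set.mem_union]
    constructor
    · rintro ⟨k, rfl⟩
      rcases Nat.lt_or_ge k.val 4 with h4 | h4
      · right
        have h := hside k.val h4
        rwa [← hv1 k] at h
      · left
        refine ⟨i0 + ((k.val - 4 : ℕ) : ZMod W.n), ?_⟩
        have h := hEW k.val h4 (ZMod.val_lt k)
        rwa [← hv1 k] at h
    · rintro (⟨i, rfl⟩ | hmem)
      · refine ⟨((4 + (i - i0).val : ℕ) : ZMod N), ?_⟩
        have hj : (i - i0).val < W.n := ZMod.val_lt _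
        have hE := hEW (4 + (i - i0).val) (by omega) (by omega)
        rw [show (4 + (i - i0).val - 4) = (i - i0).val by omega, ZMod.natCast_zmod_val,
          show i0 + (i - i0) = i by ring] at hE
        rw [hv1, hvN _ (by omega), ← hE]
      · rw [hsides] at hmem
        simp only [Set.mem_insert_iff, Set.mem_singleton_iff] at hmem
        rcases hmem with rfl | rfl | rfl | rfl
        · refine ⟨((0 : ℕ) : ZMod N), ?_⟩
          rw [hv1, hvN _ (by omega), hE0]
        · refine ⟨((1 : ℕ) : ZMod N), ?_⟩
          rw [hv1, hvN _ (by omega), hE1]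
        · refine ⟨((2 : ℕ) : ZMod N), ?_⟩
          rw [hv1, hvN _ (by omega), hE2]
        · refine ⟨((3 : ℕ) : ZMod N), ?_⟩
          rw [hv1, hvN _ (by omega), hE3]

lemma sym2_mk_ne {a b c d e f g' h' : ℤ}
    (H : ¬((a = e ∧ b = f ∧ c = g' ∧ d = h') ∨ (a = g' ∧ b = h' ∧ c = e ∧ d = f))) :
    s(((a, b) : ℤ × ℤ), ((c, d) : ℤ × ℤ)) ≠ s(((e, f) : ℤ × ℤ), ((g', h') : ℤ × ℤ)) := by
  rw [Ne, Sym2.eq_iff]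
  simp only [Prod.mk.injEq]
  tauto

lemma sides_reorderA (x y : ℤ) :
    pixelSides (x, y) =
      {s(((x, y) : ℤ × ℤ), ((x + 1, y) : ℤ × ℤ)),
       s(((x + 1, y) : ℤ × ℤ), ((x + 1, y + 1) : ℤ × ℤ)),
       s(((x + 1, y + 1) : ℤ × ℤ), ((x, y + 1) : ℤ × ℤ)),
       s(((x, y + 1) : ℤ × ℤ), ((x, y) : ℤ × ℤ))} := by
  have h1 : s(((x + 1, y + 1) : ℤ × ℤ), ((x, y + 1) : ℤ × ℤ))
      = s(((x, y + 1) : ℤ × ℤ), ((x + 1, y + 1) : ℤ × ℤ)) := Sym2.eq_swap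
  have h2 : s(((x, y + 1) : ℤ × ℤ), ((x, y) : ℤ × ℤ))
      = s(((x, y) : ℤ × ℤ), ((x, y + 1) : ℤ × ℤ)) := Sym2.eq_swap
  rw [h1, h2]
  unfold pixelSides
  dsimp only
  ext e
  simp only [Set.mem_insert_iff, Set.mem_singleton_iff]
  tauto

lemma sides_reorderB (x y : ℤ) :
    pixelSides (x, y) =
      {s(((x, y) : ℤ × ℤ), ((x, y + 1) : ℤ × ℤ)),
       s(((x, y + 1) : ℤ × ℤ), ((x + 1, y + 1) : ℤ × ℤ)),
       s(((x + 1, y + 1) : ℤ × ℤ), ((x + 1, y) : ℤ × ℤ)),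
       s(((x + 1, y) : ℤ × ℤ), ((x, y) : ℤ × ℤ))} := by
  have h1 : s(((x + 1, y + 1) : ℤ × ℤ), ((x + 1, y) : ℤ × ℤ))
      = s(((x + 1, y) : ℤ × ℤ), ((x + 1, y + 1) : ℤ × ℤ)) := Sym2.eq_swap
  have h2 : s(((x + 1, y) : ℤ × ℤ), ((x, y) : ℤ × ℤ))
      = s(((x, y) : ℤ × ℤ), ((x + 1, y) : ℤ × ℤ)) := Sym2.eq_swap
  rw [h1, h2]
  unfold pixelSides
  dsimp only
  ext e
  simp only [Set.mem_insert_iff, Set.mem_singleton_iff]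
  tauto


/-- Given a double turning Hamiltonian cycle `C` of `G(V)` (`V` solid) and a
pixel `P` of `V` none of whose side edges is traversed by `C`, there is a double turning
Hamiltonian cycle whose traversed edge set is that of `C` together with the four sides of `P`. -/
theorem augment_cycle_through_empty_pixel
    (V : Finset (ℤ × ℤ)) (hsolid : Solid V) (W : GridClosedWalk V) (hW : DoubleTurningHC W)
    (p : ℤ × ℤ) (hp : Pixel V p) (hfree : ∀ e ∈ pixelSides p, e ∉ W.Edges) :
    ∃ W' : GridClosedWalk V, DoubleTurningHC W' ∧ W'.Edges = W.Edges ∪ pixelSides p := by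
  obtain ⟨x, y⟩ := p
  obtain ⟨hvis, htrail, hturn⟩ := hW
  haveI : NeZero W.n := ⟨W.npos.ne'⟩
  have h1 := hvis (x, y) hp.1
  unfold GridClosedWalk.visits at h1
  obtain ⟨i0, hi0⟩ := Finset.card_pos.mp h1
  have hc : W.c i0 = (x, y) := (Finset.mem_filter.mp hi0).2
  have hiu : i0 - 1 + 1 = i0 := by ring
  have hadjU : GridAdj (W.c (i0 - 1)) (x, y) := by
    have h := W.adj (i0 - 1); rwa [hiu, hc] at h
  have hadjW : GridAdj (x, y) (W.c (i0 + 1)) := by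
    have h := W.adj i0; rwa [hc] at h
  have hperp : Perp (W.c (i0 - 1)) (x, y) (W.c (i0 + 1)) := by
    have h := hturn (i0 - 1)
    rwa [hiu, show i0 - 1 + 2 = i0 + 1 by ring, hc] at h
  have heU : s(W.c (i0 - 1), ((x, y) : ℤ × ℤ)) ∈ W.Edges := ⟨i0 - 1, by rw [hiu, hc]⟩
  have heW : s(((x, y) : ℤ × ℤ), W.c (i0 + 1)) ∈ W.Edges := ⟨i0, by rw [hc]⟩
  have hsb : s(((x, y) : ℤ × ℤ), ((x + 1, y) : ℤ × ℤ)) ∈ pixelSides (x, y) := by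
    unfold pixelSides; dsimp only; exact Set.mem_insert _ _
  have hsc : s(((x, y) : ℤ × ℤ), ((x, y + 1) : ℤ × ℤ)) ∈ pixelSides (x, y) := by
    unfold pixelSides; dsimp only; simp
  have hUne1 : W.c (i0 - 1) ≠ (x + 1, y) := by
    intro h
    apply hfree _ hsb
    rw [show s(((x, y) : ℤ × ℤ), ((x + 1, y) : ℤ × ℤ))
      = s(((x + 1, y) : ℤ × ℤ), ((x, y) : ℤ × ℤ)) from Sym2.eq_swap, ← h]
    exact heU
  have hUne2 : W.c (i0 - 1) ≠ (x, y + 1) := by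
    intro h
    apply hfree _ hsc
    rw [show s(((x, y) : ℤ × ℤ), ((x, y + 1) : ℤ × ℤ))
      = s(((x, y + 1) : ℤ × ℤ), ((x, y) : ℤ × ℤ)) from Sym2.eq_swap, ← h]
    exact heU
  have hWne1 : W.c (i0 + 1) ≠ (x + 1, y) := by
    intro h
    apply hfree _ hsb
    rw [← h]
    exact heW
  have hWne2 : W.c (i0 + 1) ≠ (x, y + 1) := by
    intro h
    apply hfree _ hsc
    rw [← h]
    exact heW
  have hu' : (W.c (i0 - 1)).1 = x ∧ (W.c (i0 - 1)).2 = y - 1 ∨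
      (W.c (i0 - 1)).1 = x - 1 ∧ (W.c (i0 - 1)).2 = y := by
    have hne1 : ¬((W.c (i0 - 1)).1 = x + 1 ∧ (W.c (i0 - 1)).2 = y) := by
      rintro ⟨hh1, hh2⟩; exact hUne1 (Prod.ext_iff.mpr ⟨hh1, hh2⟩)
    have hne2 : ¬((W.c (i0 - 1)).1 = x ∧ (W.c (i0 - 1)).2 = y + 1) := by
      rintro ⟨hh1, hh2⟩; exact hUne2 (Prod.ext_iff.mpr ⟨hh1, hh2⟩)
    unfold GridAdj at hadjU
    dsimp only at hadjU
    omega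
  have hw' : (W.c (i0 + 1)).1 = x ∧ (W.c (i0 + 1)).2 = y - 1 ∨
      (W.c (i0 + 1)).1 = x - 1 ∧ (W.c (i0 + 1)).2 = y := by
    have hne1 : ¬((W.c (i0 + 1)).1 = x + 1 ∧ (W.c (i0 + 1)).2 = y) := by
      rintro ⟨hh1, hh2⟩; exact hWne1 (Prod.ext_iff.mpr ⟨hh1, hh2⟩)
    have hne2 : ¬((W.c (i0 + 1)).1 = x ∧ (W.c (i0 + 1)).2 = y + 1) := by
      rintro ⟨hh1, hh2⟩; exact hWne2 (Prod.ext_iff.mpr ⟨hh1, hh2⟩)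
    unfold GridAdj at hadjW
    dsimp only at hadjW
    omega
  unfold Perp at hperp
  dsimp only at hperp
  rcases hu' with ⟨hu1, hu2⟩ | ⟨hu1, hu2⟩
  · -- incoming edge vertical (from below); square traversed a → b → d → c → a
    have hww : (W.c (i0 + 1)).1 = x - 1 ∧ (W.c (i0 + 1)).2 = y := by omega
    refine build_aux V W hvis htrail hturn (x, y) hfree i0
      (x, y) (x + 1, y) (x + 1, y + 1) (x, y + 1) hc
      hp.2.1 hp.2.2.2 hp.2.2.1
      (by unfold Perp; dsimp only; omega)
      (by unfold Perp; dsimp only; omega)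
      (by unfold Perp; dsimp only; omega)
      (by unfold Perp; dsimp only; omega)
      (by unfold Perp; dsimp only; omega)
      (by unfold GridAdj; dsimp only; omega)
      (by unfold GridAdj; dsimp only; omega)
      (by unfold GridAdj; dsimp only; omega)
      (by unfold GridAdj; dsimp only; omega)
      (sides_reorderA x y)
      (sym2_mk_ne (by omega)) (sym2_mk_ne (by omega)) (sym2_mk_ne (by omega))
      (sym2_mk_ne (by omega)) (sym2_mk_ne (by omega)) (sym2_mk_ne (by omega))
  · -- incoming edge horizontal (from the left); square traversed a → c → d → b → a
    have hww : (W.c (i0 + 1)).1 = x ∧ (W.c (i0 + 1)).2 = y - 1 := by omega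
    refine build_aux V W hvis htrail hturn (x, y) hfree i0
      (x, y) (x, y + 1) (x + 1, y + 1) (x + 1, y) hc
      hp.2.2.1 hp.2.2.2 hp.2.1
      (by unfold Perp; dsimp only; omega)
      (by unfold Perp; dsimp only; omega)
      (by unfold Perp; dsimp only; omega)
      (by unfold Perp; dsimp only; omega)
      (by unfold Perp; dsimp only; omega)
      (by unfold GridAdj; dsimp only; omega)
      (by unfold GridAdj; dsimp only; omega)
      (by unfold GridAdj; dsimp only; omega)
      (by unfold GridAdj; dsimp only; omega)
      (sides_reorderB x y)
      (sym2_mk_ne (by omega)) (sym2_mk_ne (by omega)) (sym2_mk_ne (by omega))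
      (sym2_mk_ne (by omega)) (sym2_mk_ne (by omega)) (sym2_mk_ne (by omega))
end

section
/- Let V be a finite nonempty solid subset of ℤ². If the square grid graph G(V) admits a double turning Hamiltonian cycle, then there exists ε ∈ {0,1} such that every vertex of V is a corner of some ε-pixel of V. -/
namespace DT

def cross (u v p : ℤ × ℤ) : ℤ :=
  if u.2 = v.2 ∧ u.2 ≤ p.2 ∧ u.1 = p.1 ∧ v.1 = p.1 + 1 then 1
  else if u.2 = v.2 ∧ u.2 ≤ p.2 ∧ u.1 = p.1 + 1 ∧ v.1 = p.1 then -1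
  else 0

def eInd (u v A B : ℤ × ℤ) : ℤ :=
  if u.1 = A.1 ∧ u.2 = A.2 ∧ v.1 = B.1 ∧ v.2 = B.2 then 1
  else if u.1 = B.1 ∧ u.2 = B.2 ∧ v.1 = A.1 ∧ v.2 = A.2 then -1
  else 0

def phih (p z : ℤ × ℤ) : ℤ := if z.1 = p.1 ∧ z.2 ≤ p.2 then -1 else 0

lemma cross_vert (u v p : ℤ × ℤ) :
    cross u v p - cross u v (p.1, p.2 - 1)
      = eInd u v (p.1, p.2) (p.1 + 1, p.2) := by
  simp only [cross, eInd]
  split_ifs <;> omega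

lemma cross_horiz (u v p : ℤ × ℤ) (h : GridAdj u v) :
    cross u v p - cross u v (p.1 - 1, p.2)
      = (phih p v - phih p u) - eInd u v (p.1, p.2) (p.1, p.2 + 1) := by
  rcases h with ⟨h1, h2⟩ | ⟨h1, h2⟩ <;>
  · simp only [cross, eInd, phih]
    split_ifs <;> omega

section Walk

variable {n : ℕ} [NeZero n] (c : ZMod n → ℤ × ℤ)

/-- winding number of the closed walk `c` around the square with lower-left corner `p`. -/
def wind (p : ℤ × ℤ) : ℤ := ∑ i : ZMod n, cross (c i) (c (i + 1)) p

lemma sum_shift (f : ZMod n → ℤ) : ∑ i : ZMod n, f (i + 1) = ∑ i : ZMod n, f i :=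
  Fintype.sum_equiv (Equiv.addRight 1) _ _ (fun _ => rfl)

lemma telescope (φ : ℤ × ℤ → ℤ) : ∑ i : ZMod n, (φ (c (i + 1)) - φ (c i)) = 0 := by
  rw [Finset.sum_sub_distrib]
  exact sub_eq_zero_of_eq (sum_shift (fun i => φ (c i)))

lemma wind_vert (p : ℤ × ℤ) :
    wind c p - wind c (p.1, p.2 - 1)
      = ∑ i : ZMod n, eInd (c i) (c (i + 1)) (p.1, p.2) (p.1 + 1, p.2) := by
  unfold wind
  rw [← Finset.sum_sub_distrib]
  exact Finset.sum_congr rfl fun i _ => cross_vert _ _ _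

lemma wind_horiz (hadj : ∀ i, GridAdj (c i) (c (i + 1))) (p : ℤ × ℤ) :
    wind c p - wind c (p.1 - 1, p.2)
      = - ∑ i : ZMod n, eInd (c i) (c (i + 1)) (p.1, p.2) (p.1, p.2 + 1) := by
  unfold wind
  rw [← Finset.sum_sub_distrib]
  have : ∀ i ∈ Finset.univ, cross (c i) (c (i + 1)) p - cross (c i) (c (i + 1)) (p.1 - 1, p.2)
      = (phih p (c (i + 1)) - phih p (c i)) - eInd (c i) (c (i + 1)) (p.1, p.2) (p.1, p.2 + 1) :=
    fun i _ => cross_horiz _ _ _ (hadj i)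
  rw [Finset.sum_congr rfl this, Finset.sum_sub_distrib, telescope, zero_sub]

lemma eInd_eq_zero {u v A B : ℤ × ℤ} (h : s(u, v) ≠ s(A, B)) : eInd u v A B = 0 := by
  unfold eInd
  split_ifs with h1 h2
  · exact absurd (by rw [Sym2.eq_iff]; left; exact ⟨Prod.ext h1.1 h1.2.1, Prod.ext h1.2.2.1 h1.2.2.2⟩) h
  · exact absurd (by rw [Sym2.eq_iff]; right; exact ⟨Prod.ext h2.1 h2.2.1, Prod.ext h2.2.2.1 h2.2.2.2⟩) h
  · rfl

lemma eInd_of_eq {u v A B : ℤ × ℤ} (hAB : A ≠ B) (h : s(u, v) = s(A, B)) :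
    eInd u v A B = 1 ∨ eInd u v A B = -1 := by
  rw [Sym2.eq_iff] at h
  unfold eInd
  rcases h with ⟨hu, hv⟩ | ⟨hu, hv⟩
  · left
    rw [hu, hv, if_pos ⟨rfl, rfl, rfl, rfl⟩]
  · right
    rw [hu, hv]
    have hne : ¬(B.1 = A.1 ∧ B.2 = A.2 ∧ A.1 = B.1 ∧ A.2 = B.2) :=
      fun ⟨e1, e2, _, _⟩ => hAB (Prod.ext e1.symm e2.symm)
    rw [if_neg hne, if_pos ⟨rfl, rfl, rfl, rfl⟩]

lemma eSum_traversed (htr : ∀ i j : ZMod n, s(c i, c (i + 1)) = s(c j, c (j + 1)) → i = j)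
    {A B : ℤ × ℤ} (hAB : A ≠ B) {i₀ : ZMod n} (h : s(c i₀, c (i₀ + 1)) = s(A, B)) :
    (∑ i : ZMod n, eInd (c i) (c (i + 1)) A B) = 1 ∨
    (∑ i : ZMod n, eInd (c i) (c (i + 1)) A B) = -1 := by
  have : ∑ i : ZMod n, eInd (c i) (c (i + 1)) A B = eInd (c i₀) (c (i₀ + 1)) A B := by
    apply Finset.sum_eq_single_of_mem i₀ (Finset.mem_univ _)
    intro j _ hj
    exact eInd_eq_zero (fun he => hj (htr j i₀ (he.trans h.symm)))
  rw [this]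
  exact eInd_of_eq hAB h

lemma eSum_untraversed {A B : ℤ × ℤ} (h : ∀ i : ZMod n, s(c i, c (i + 1)) ≠ s(A, B)) :
    (∑ i : ZMod n, eInd (c i) (c (i + 1)) A B) = 0 :=
  Finset.sum_eq_zero fun i _ => eInd_eq_zero (h i)


end Walk

/-- the two unit squares flanking the edge `u v`. -/
def fl1 (u v : ℤ × ℤ) : ℤ × ℤ := if u.2 = v.2 then (min u.1 v.1, u.2) else (u.1, min u.2 v.2)
def fl2 (u v : ℤ × ℤ) : ℤ × ℤ :=
  if u.2 = v.2 then (min u.1 v.1, u.2 - 1) else (u.1 - 1, min u.2 v.2)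

/-- checkerboard parity of the square with lower-left corner `p`. -/
def llp (p : ℤ × ℤ) : ZMod 2 := ((p.1 + p.2 : ℤ) : ZMod 2)

lemma odd_iff_cast {x : ℤ} : Odd x ↔ (x : ZMod 2) = 1 := by
  constructor
  · rintro ⟨k, rfl⟩
    push_cast
    rw [show (2 : ZMod 2) = 0 by decide]
    ring
  · intro h
    by_contra hodd
    obtain ⟨k, rfl⟩ := Int.not_odd_iff_even.mp hodd
    push_cast at h
    have hz : ∀ z : ZMod 2, z + z = 0 := by decide
    rw [hz] at h
    exact zero_ne_one h

lemma llp_fl (u v : ℤ × ℤ) : llp (fl1 u v) + llp (fl2 u v) = 1 := by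
  have h2 : (2 : ZMod 2) = 0 := by decide
  unfold fl1 fl2 llp
  split_ifs with h
  · push_cast
    linear_combination (((min u.1 v.1 : ℤ) : ZMod 2) + ((u.2 : ℤ) : ZMod 2) - 1) * h2
  · push_cast
    linear_combination (((u.1 : ℤ) : ZMod 2) + ((min u.2 v.2 : ℤ) : ZMod 2) - 1) * h2

section Walk2

variable {n : ℕ} [NeZero n] (c : ZMod n → ℤ × ℤ)

lemma sub_to_add : ∀ {a b : ZMod 2}, a - b = 1 → a + b = 1 := by decide

/-- the two flanks of a traversed edge have opposite winding parity. -/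
lemma flank_parity (hadj : ∀ i, GridAdj (c i) (c (i + 1)))
    (htr : ∀ i j : ZMod n, s(c i, c (i + 1)) = s(c j, c (j + 1)) → i = j) (i : ZMod n) :
    ((wind c (fl1 (c i) (c (i + 1))) : ZMod 2))
      + ((wind c (fl2 (c i) (c (i + 1))) : ZMod 2)) = 1 := by
  rcases hadj i with ⟨h1, h2⟩ | ⟨h1, h2⟩
  · -- vertical edge
    have hne : ¬ (c i).2 = (c (i + 1)).2 := by omega
    have hfl1 : fl1 (c i) (c (i + 1)) = ((c i).1, min (c i).2 (c (i + 1)).2) := by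
      unfold fl1; rw [if_neg hne]
    have hfl2 : fl2 (c i) (c (i + 1)) = ((c i).1 - 1, min (c i).2 (c (i + 1)).2) := by
      unfold fl2; rw [if_neg hne]
    set A : ℤ × ℤ := ((c i).1, min (c i).2 (c (i + 1)).2) with hA
    set B : ℤ × ℤ := ((c i).1, min (c i).2 (c (i + 1)).2 + 1) with hB
    have hAB : A ≠ B := by
      rw [hA, hB]
      intro h
      rw [Prod.mk.injEq] at h
      omega
    have hedge : s(c i, c (i + 1)) = s(A, B) := by
      rw [Sym2.eq_iff]
      rcases h2 with h2 | h2
      · right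
        rw [hA, hB]
        constructor <;> apply Prod.ext <;> simp <;> omega
      · left
        rw [hA, hB]
        constructor <;> apply Prod.ext <;> simp <;> omega
    have hdiff := wind_horiz c hadj A
    have hsum := eSum_traversed c htr hAB hedge
    rw [hfl1, hfl2]
    have hAfst : (A.1, A.2) = A := rfl
    have hApair : (A.1, A.2 + 1) = B := by rw [hA, hB]
    rw [hAfst, hApair] at hdiff
    have hA2 : (A.1 - 1, A.2) = ((c i).1 - 1, min (c i).2 (c (i + 1)).2) := by rw [hA]
    rw [hA2] at hdiff
    apply sub_to_add
    have : ((wind c A - wind c ((c i).1 - 1, min (c i).2 (c (i + 1)).2) : ℤ) : ZMod 2) = 1 := by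
      rw [hdiff]
      rcases hsum with hs | hs <;> rw [hs] <;> decide
    push_cast at this
    rw [hA] at this
    exact this
  · -- horizontal edge
    have heq : (c i).2 = (c (i + 1)).2 := h1
    have hfl1 : fl1 (c i) (c (i + 1)) = (min (c i).1 (c (i + 1)).1, (c i).2) := by
      unfold fl1; rw [if_pos heq]
    have hfl2 : fl2 (c i) (c (i + 1)) = (min (c i).1 (c (i + 1)).1, (c i).2 - 1) := by
      unfold fl2; rw [if_pos heq]
    set A : ℤ × ℤ := (min (c i).1 (c (i + 1)).1, (c i).2) with hA
    set B : ℤ × ℤ := (min (c i).1 (c (i + 1)).1 + 1, (c i).2) with hB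
    have hAB : A ≠ B := by
      rw [hA, hB]
      intro h
      rw [Prod.mk.injEq] at h
      omega
    have hedge : s(c i, c (i + 1)) = s(A, B) := by
      rw [Sym2.eq_iff]
      rcases h2 with h2 | h2
      · right
        rw [hA, hB]
        constructor <;> apply Prod.ext <;> simp <;> omega
      · left
        rw [hA, hB]
        constructor <;> apply Prod.ext <;> simp <;> omega
    have hdiff := wind_vert c A
    have hsum := eSum_traversed c htr hAB hedge
    rw [hfl1, hfl2]
    have hAfst : (A.1, A.2) = A := rfl
    have hApair : (A.1 + 1, A.2) = B := by rw [hA, hB]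
    rw [hAfst, hApair] at hdiff
    have hA2 : (A.1, A.2 - 1) = (min (c i).1 (c (i + 1)).1, (c i).2 - 1) := by rw [hA]
    rw [hA2] at hdiff
    apply sub_to_add
    have : ((wind c A - wind c (min (c i).1 (c (i + 1)).1, (c i).2 - 1) : ℤ) : ZMod 2) = 1 := by
      rw [hdiff]
      rcases hsum with hs | hs <;> rw [hs] <;> decide
    push_cast at this
    rw [hA] at this
    exact this

/-- the checkerboard parity of the odd flank, as a function of the step. -/
def kap (i : ZMod n) : ZMod 2 :=
  llp (fl1 (c i) (c (i + 1))) + (wind c (fl1 (c i) (c (i + 1))) : ZMod 2) + 1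

lemma kap_flank (hadj : ∀ i, GridAdj (c i) (c (i + 1)))
    (htr : ∀ i j : ZMod n, s(c i, c (i + 1)) = s(c j, c (j + 1)) → i = j) (i : ZMod n)
    {P : ℤ × ℤ} (hP : P = fl1 (c i) (c (i + 1)) ∨ P = fl2 (c i) (c (i + 1))) :
    kap c i = llp P + (wind c P : ZMod 2) + 1 := by
  rcases hP with rfl | rfl
  · rfl
  · unfold kap
    have h1 := llp_fl (c i) (c (i + 1))
    have h2 := flank_parity c hadj htr i
    have key : ∀ a b a' b' : ZMod 2, a + a' = 1 → b + b' = 1 → a + b + 1 = a' + b' + 1 := by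
      decide
    exact key _ _ _ _ h1 h2


def Perp' (u v w : ℤ × ℤ) : Prop :=
  (u.2 = v.2 ∧ v.1 = w.1) ∨ (u.1 = v.1 ∧ v.2 = w.2)

lemma kap_step (hadj : ∀ i, GridAdj (c i) (c (i + 1)))
    (htr : ∀ i j : ZMod n, s(c i, c (i + 1)) = s(c j, c (j + 1)) → i = j)
    (hturn : ∀ i : ZMod n, Perp' (c i) (c (i + 1)) (c (i + 2))) (i : ZMod n) :
    kap c (i + 1) = kap c i := by
  have hc : i + 1 + 1 = i + 2 := by rw [add_assoc]; norm_num
  have adj1 := hadj i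
  have adj2 : GridAdj (c (i + 1)) (c (i + 1 + 1)) := hadj (i + 1)
  rw [hc] at adj2
  rcases hturn i with ⟨hp1, hp2⟩ | ⟨hp1, hp2⟩
  · -- step i horizontal, step i+1 vertical
    have ha : (c i).1 - (c (i + 1)).1 = 1 ∨ (c (i + 1)).1 - (c i).1 = 1 := by
      rcases adj1 with ⟨x1, x2⟩ | ⟨x1, x2⟩ <;> omega
    have hb : (c (i + 1)).2 - (c (i + 2)).2 = 1 ∨ (c (i + 2)).2 - (c (i + 1)).2 = 1 := by
      rcases adj2 with ⟨x1, x2⟩ | ⟨x1, x2⟩ <;> omega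
    set Q : ℤ × ℤ := (min (c i).1 (c (i + 1)).1, min (c (i + 1)).2 (c (i + 2)).2) with hQ
    have hQ1 : Q = fl1 (c i) (c (i + 1)) ∨ Q = fl2 (c i) (c (i + 1)) := by
      unfold fl1 fl2
      rw [if_pos hp1, if_pos hp1, hQ]
      rcases hb with hb | hb
      · right; apply Prod.ext <;> simp <;> omega
      · left; apply Prod.ext <;> simp <;> omega
    have hQ2 : Q = fl1 (c (i + 1)) (c (i + 1 + 1)) ∨ Q = fl2 (c (i + 1)) (c (i + 1 + 1)) := by
      rw [hc]
      have hne : ¬ (c (i + 1)).2 = (c (i + 2)).2 := by omega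
      unfold fl1 fl2
      rw [if_neg hne, if_neg hne, hQ]
      rcases ha with ha | ha
      · left; apply Prod.ext <;> simp <;> omega
      · right; apply Prod.ext <;> simp <;> omega
    rw [kap_flank c hadj htr (i + 1) hQ2, kap_flank c hadj htr i hQ1]
  · -- step i vertical, step i+1 horizontal
    have ha : (c i).2 - (c (i + 1)).2 = 1 ∨ (c (i + 1)).2 - (c i).2 = 1 := by
      rcases adj1 with ⟨x1, x2⟩ | ⟨x1, x2⟩ <;> omega
    have hb : (c (i + 1)).1 - (c (i + 2)).1 = 1 ∨ (c (i + 2)).1 - (c (i + 1)).1 = 1 := by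
      rcases adj2 with ⟨x1, x2⟩ | ⟨x1, x2⟩ <;> omega
    set Q : ℤ × ℤ := (min (c (i + 1)).1 (c (i + 2)).1, min (c i).2 (c (i + 1)).2) with hQ
    have hQ1 : Q = fl1 (c i) (c (i + 1)) ∨ Q = fl2 (c i) (c (i + 1)) := by
      have hne : ¬ (c i).2 = (c (i + 1)).2 := by omega
      unfold fl1 fl2
      rw [if_neg hne, if_neg hne, hQ]
      rcases hb with hb | hb
      · right; apply Prod.ext <;> simp <;> omega
      · left; apply Prod.ext <;> simp <;> omega
    have hQ2 : Q = fl1 (c (i + 1)) (c (i + 1 + 1)) ∨ Q = fl2 (c (i + 1)) (c (i + 1 + 1)) := by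
      rw [hc]
      unfold fl1 fl2
      rw [if_pos hp2, if_pos hp2, hQ]
      rcases ha with ha | ha
      · left; apply Prod.ext <;> simp <;> omega
      · right; apply Prod.ext <;> simp <;> omega
    rw [kap_flank c hadj htr (i + 1) hQ2, kap_flank c hadj htr i hQ1]

lemma kap_const (hadj : ∀ i, GridAdj (c i) (c (i + 1)))
    (htr : ∀ i j : ZMod n, s(c i, c (i + 1)) = s(c j, c (j + 1)) → i = j)
    (hturn : ∀ i : ZMod n, Perp' (c i) (c (i + 1)) (c (i + 2))) (i : ZMod n) :
    kap c i = kap c 0 := by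
  have key : ∀ k : ℕ, kap c (k : ZMod n) = kap c 0 := by
    intro k
    induction k with
    | zero => norm_num
    | succ m ih =>
      have : ((m + 1 : ℕ) : ZMod n) = (m : ZMod n) + 1 := by push_cast; ring
      rw [this, kap_step c hadj htr hturn]
      exact ih
  have := key i.val
  rwa [ZMod.natCast_rightInverse i] at this

end Walk2

section Walk3

variable {n : ℕ} [NeZero n] (c : ZMod n → ℤ × ℤ) {V : Finset (ℤ × ℤ)}

lemma untraversed (hmem : ∀ i, c i ∈ V) {z : ℤ × ℤ} (hz : z ∉ V) {A B : ℤ × ℤ}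
    (hAB : A = z ∨ B = z) (i : ZMod n) : s(c i, c (i + 1)) ≠ s(A, B) := by
  intro h
  rw [Sym2.eq_iff] at h
  rcases hAB with rfl | rfl
  · rcases h with ⟨h1, h2⟩ | ⟨h1, h2⟩
    · exact hz (h1 ▸ hmem i)
    · exact hz (h2 ▸ hmem (i + 1))
  · rcases h with ⟨h1, h2⟩ | ⟨h1, h2⟩
    · exact hz (h2 ▸ hmem (i + 1))
    · exact hz (h1 ▸ hmem i)

lemma quad_eq (hadj : ∀ i, GridAdj (c i) (c (i + 1))) (hmem : ∀ i, c i ∈ V)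
    {z : ℤ × ℤ} (hz : z ∉ V) :
    wind c (z.1 - 1, z.2) = wind c z ∧ wind c (z.1, z.2 - 1) = wind c z ∧
      wind c (z.1 - 1, z.2 - 1) = wind c z := by
  have e1 : wind c z - wind c (z.1 - 1, z.2) = 0 := by
    rw [wind_horiz c hadj z,
      eSum_untraversed c (fun i => untraversed c hmem hz (Or.inl Prod.mk.eta) i), neg_zero]
  have e2 : wind c z - wind c (z.1, z.2 - 1) = 0 := by
    rw [wind_vert c z,
      eSum_untraversed c (fun i => untraversed c hmem hz (Or.inl Prod.mk.eta) i)]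
  have e3 : wind c (z.1 - 1, z.2) - wind c (z.1 - 1, z.2 - 1) = 0 := by
    have hB : ((z.1 - 1 : ℤ), z.2).1 + 1 = z.1 := by simp
    have := wind_vert c ((z.1 - 1 : ℤ), z.2)
    rw [eSum_untraversed c (fun i => untraversed c hmem hz
        (Or.inr (by apply Prod.ext <;> simp)) i)] at this
    simpa using this
  refine ⟨by omega, by omega, by omega⟩

lemma spread (hadj : ∀ i, GridAdj (c i) (c (i + 1))) (hmem : ∀ i, c i ∈ V)
    {z z' : ℤ × ℤ} (hz : z ∉ V) (hz' : z' ∉ V) (hgadj : GridAdj z z')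
    (ho : Odd (wind c z)) : Odd (wind c z') := by
  obtain ⟨q1, q2, q3⟩ := quad_eq c hadj hmem hz
  obtain ⟨r1, r2, r3⟩ := quad_eq c hadj hmem hz'
  rcases hgadj with ⟨h1, h2⟩ | ⟨h1, h2⟩
  · rcases h2 with h2 | h2
    · have hp : ((z.1 : ℤ), z.2 - 1) = z' := by apply Prod.ext <;> simp <;> omega
      rw [hp] at q2
      rw [q2]
      exact ho
    · have hp : ((z'.1 : ℤ), z'.2 - 1) = z := by apply Prod.ext <;> simp <;> omega
      rw [hp] at r2
      rw [← r2]
      exact ho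
  · rcases h2 with h2 | h2
    · have hp : ((z.1 - 1 : ℤ), z.2) = z' := by apply Prod.ext <;> simp <;> omega
      rw [hp] at q1
      rw [q1]
      exact ho
    · have hp : ((z'.1 - 1 : ℤ), z'.2) = z := by apply Prod.ext <;> simp <;> omega
      rw [hp] at r1
      rw [← r1]
      exact ho

lemma wind_zero_of_high (hadj : ∀ i, GridAdj (c i) (c (i + 1))) {z : ℤ × ℤ}
    (h : ∀ i, (c i).2 ≤ z.2) : wind c z = 0 := by
  have hpt : ∀ i : ZMod n, cross (c i) (c (i + 1)) z
      = (if z.1 + 1 ≤ (c (i + 1)).1 then (1 : ℤ) else 0)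
        - (if z.1 + 1 ≤ (c i).1 then (1 : ℤ) else 0) := by
    intro i
    have hi := h i
    have hi2 := h (i + 1)
    rcases hadj i with ⟨x1, x2⟩ | ⟨x1, x2⟩ <;>
    · unfold cross
      split_ifs <;> omega
  unfold wind
  rw [Finset.sum_congr rfl (fun i _ => hpt i)]
  exact telescope c (fun t => if z.1 + 1 ≤ t.1 then (1 : ℤ) else 0)

lemma cross_support {u v z : ℤ × ℤ} (h : cross u v z ≠ 0) :
    (z.1 = u.1 ∨ z.1 = u.1 - 1) ∧ u.2 ≤ z.2 := by
  unfold cross at h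
  split_ifs at h with h1 h2
  · omega
  · omega
  · exact absurd rfl h

lemma odd_wind_finite (hVne : V.Nonempty) (hadj : ∀ i, GridAdj (c i) (c (i + 1)))
    (hmem : ∀ i, c i ∈ V) : Set.Finite {z : ℤ × ℤ | Odd (wind c z)} := by
  obtain ⟨v₀, hv₀⟩ := hVne
  set xlo := V.inf' ⟨v₀, hv₀⟩ (fun v => v.1) with hxlo
  set xhi := V.sup' ⟨v₀, hv₀⟩ (fun v => v.1) with hxhi
  set ylo := V.inf' ⟨v₀, hv₀⟩ (fun v => v.2) with hylo
  set yhi := V.sup' ⟨v₀, hv₀⟩ (fun v => v.2) with hyhi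
  apply Set.Finite.subset (Finset.finite_toSet ((Finset.Icc (xlo - 1) xhi) ×ˢ (Finset.Icc ylo yhi)))
  intro z hz
  simp only [Set.mem_setOf_eq] at hz
  have hz0 : wind c z ≠ 0 := by
    intro h0
    rw [h0] at hz
    exact (Int.not_odd_iff_even.mpr Even.zero) hz
  -- some crossing is nonzero
  have hex : ∃ i : ZMod n, cross (c i) (c (i + 1)) z ≠ 0 := by
    by_contra hall
    push_neg at hall
    exact hz0 (Finset.sum_eq_zero (fun i _ => hall i))
  obtain ⟨i, hi⟩ := hex
  obtain ⟨hx, hy⟩ := cross_support hi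
  -- some vertex is strictly above z
  have hhigh : ∃ j : ZMod n, z.2 < (c j).2 := by
    by_contra hall
    push_neg at hall
    exact hz0 (wind_zero_of_high c hadj hall)
  obtain ⟨j, hj⟩ := hhigh
  have b1 : xlo ≤ (c i).1 := Finset.inf'_le _ (hmem i)
  have b2 : (c i).1 ≤ xhi := Finset.le_sup' _ (hmem i)
  have b3 : ylo ≤ (c i).2 := Finset.inf'_le _ (hmem i)
  have b4 : (c j).2 ≤ yhi := Finset.le_sup' _ (hmem j)
  simp only [Finset.coe_product, Set.mem_prod, Finset.mem_coe, Finset.mem_Icc]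
  omega

lemma corner_mem (hVne : V.Nonempty) (hadj : ∀ i, GridAdj (c i) (c (i + 1)))
    (hmem : ∀ i, c i ∈ V)
    (hsolid : ∀ v : ℤ × ℤ, v ∉ V →
      {w : ℤ × ℤ | Relation.ReflTransGen
        (fun a b => GridAdj a b ∧ a ∉ V ∧ b ∉ V) v w}.Infinite)
    {P : ℤ × ℤ} (hoP : Odd (wind c P)) {z : ℤ × ℤ}
    (hz4 : z = P ∨ z = (P.1 + 1, P.2) ∨ z = (P.1, P.2 + 1) ∨ z = (P.1 + 1, P.2 + 1)) :
    z ∈ V := by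
  by_contra hzV
  have hbase : Odd (wind c z) := by
    obtain ⟨q1, q2, q3⟩ := quad_eq c hadj hmem hzV
    rcases hz4 with rfl | rfl | rfl | rfl
    · exact hoP
    · have hp : (((P.1 + 1 : ℤ), P.2).1 - 1, ((P.1 + 1 : ℤ), P.2).2) = P := by
        apply Prod.ext <;> simp
      rw [hp] at q1
      rw [← q1]
      exact hoP
    · have hp : (((P.1 : ℤ), P.2 + 1).1, ((P.1 : ℤ), P.2 + 1).2 - 1) = P := by
        apply Prod.ext <;> simp
      rw [hp] at q2
      rw [← q2]
      exact hoP
    · have hp : (((P.1 + 1 : ℤ), P.2 + 1).1 - 1, ((P.1 + 1 : ℤ), P.2 + 1).2 - 1) = P := by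
        apply Prod.ext <;> simp
      rw [hp] at q3
      rw [← q3]
      exact hoP
  have hinv : ∀ w, Relation.ReflTransGen
      (fun a b => GridAdj a b ∧ a ∉ V ∧ b ∉ V) z w → (w ∉ V ∧ Odd (wind c w)) := by
    intro w hw
    induction hw with
    | refl => exact ⟨hzV, hbase⟩
    | tail hab hbc ih => exact ⟨hbc.2.2, spread c hadj hmem ih.1 hbc.2.2 hbc.1 ih.2⟩
  exact absurd (((hsolid z hzV).mono (fun w hw => (hinv w hw).2)))
    (odd_wind_finite c hVne hadj hmem).not_infinite

end Walk3

end DT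


lemma corner_of_flank {u v P : ℤ × ℤ} (h : GridAdj u v)
    (hP : P = DT.fl1 u v ∨ P = DT.fl2 u v) : v ∈ pixelCorners P := by
  rcases h with ⟨h1, h2⟩ | ⟨h1, h2⟩
  · have hne : ¬ u.2 = v.2 := by omega
    rcases hP with rfl | rfl <;>
      simp only [pixelCorners, DT.fl1, DT.fl2, if_neg hne, Set.mem_insert_iff,
        Set.mem_singleton_iff, Prod.ext_iff] <;> simp <;> omega
  · rcases hP with rfl | rfl <;>
      simp only [pixelCorners, DT.fl1, DT.fl2, if_pos h1, Set.mem_insert_iff,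
        Set.mem_singleton_iff, Prod.ext_iff] <;> simp <;> omega

/-- If `G(V)` (`V` finite nonempty solid) admits a double turning Hamiltonian
cycle, then there is `ε ∈ {0, 1}` such that every vertex of `V` is a corner of some
`ε`-pixel of `V`. -/
theorem double_turning_gives_checkering
    (V : Finset (ℤ × ℤ)) (hne : V.Nonempty) (hsolid : Solid V)
    (hex : ∃ W : GridClosedWalk V, DoubleTurningHC W) :
    ∃ ε : ZMod 2, ∀ v ∈ V, ∃ p : ℤ × ℤ, EpsPixel V ε p ∧ v ∈ pixelCorners p := by
  obtain ⟨W, hvis, htrail, hturn⟩ := hex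
  haveI : NeZero W.n := ⟨W.npos.ne'⟩
  have hadj : ∀ i, GridAdj (W.c i) (W.c (i + 1)) := W.adj
  have hmem : ∀ i, W.c i ∈ V := W.mem
  have htr : ∀ i j : ZMod W.n, s(W.c i, W.c (i + 1)) = s(W.c j, W.c (j + 1)) → i = j := htrail
  have hturn' : ∀ i : ZMod W.n, DT.Perp' (W.c i) (W.c (i + 1)) (W.c (i + 2)) := fun i => hturn i
  have hsolid' : ∀ v : ℤ × ℤ, v ∉ V →
      {w : ℤ × ℤ | Relation.ReflTransGen
        (fun a b => GridAdj a b ∧ a ∉ V ∧ b ∉ V) v w}.Infinite := hsolid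
  refine ⟨DT.kap W.c 0, fun v hv => ?_⟩
  -- find a time at which the walk visits `v`
  have h1 : 1 ≤ W.visits v := hvis v hv
  unfold GridClosedWalk.visits at h1
  have hnonempty : (Finset.univ.filter (fun i : ZMod W.n => W.c i = v)).Nonempty :=
    Finset.card_pos.mp (lt_of_lt_of_le zero_lt_one h1)
  obtain ⟨j, hj⟩ := hnonempty
  have hadd : j - 1 + 1 = j := by ring
  have hcv : W.c (j - 1 + 1) = v := by rw [hadd]; exact (Finset.mem_filter.mp hj).2
  set i : ZMod W.n := j - 1 with hi
  -- pick the odd-winding flank of the edge traversed at time `i`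
  have hpar := DT.flank_parity W.c hadj htr i
  have hoddflank : ∃ P, (P = DT.fl1 (W.c i) (W.c (i + 1)) ∨ P = DT.fl2 (W.c i) (W.c (i + 1))) ∧
      Odd (DT.wind W.c P) := by
    by_cases hO : Odd (DT.wind W.c (DT.fl1 (W.c i) (W.c (i + 1))))
    · exact ⟨_, Or.inl rfl, hO⟩
    · refine ⟨_, Or.inr rfl, DT.odd_iff_cast.mpr ?_⟩
      have h0 : ((DT.wind W.c (DT.fl1 (W.c i) (W.c (i + 1))) : ℤ) : ZMod 2) ≠ 1 :=
        fun h => hO (DT.odd_iff_cast.mpr h)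
      have hz : ∀ a b : ZMod 2, a + b = 1 → a ≠ 1 → b = 1 := by decide
      exact hz _ _ hpar h0
  obtain ⟨P, hPfl, hPodd⟩ := hoddflank
  refine ⟨P, ⟨⟨?_, ?_, ?_, ?_⟩, ?_⟩, ?_⟩
  · exact DT.corner_mem W.c hne hadj hmem hsolid' hPodd (Or.inl rfl)
  · exact DT.corner_mem W.c hne hadj hmem hsolid' hPodd (Or.inr (Or.inl rfl))
  · exact DT.corner_mem W.c hne hadj hmem hsolid' hPodd (Or.inr (Or.inr (Or.inl rfl)))
  · exact DT.corner_mem W.c hne hadj hmem hsolid' hPodd (Or.inr (Or.inr (Or.inr rfl)))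
  · -- the checkerboard parity of `P` equals the invariant `kap 0`
    have hkf := DT.kap_flank W.c hadj htr i hPfl
    have hk := DT.kap_const W.c hadj htr hturn' i
    have hcast : ((DT.wind W.c P : ℤ) : ZMod 2) = 1 := DT.odd_iff_cast.mp hPodd
    rw [hcast] at hkf
    have h11 : ∀ a : ZMod 2, a + 1 + 1 = a := by decide
    rw [h11] at hkf
    show DT.llp P = DT.kap W.c 0
    rw [← hkf, hk]
  · -- `v` is a corner of `P`
    have := corner_of_flank (hadj i) hPfl
    rwa [hcv] at this
end

section
/- Let V be a finite nonempty solid subset of ℤ² and let ε ∈ {0,1} be such that every vertex of V is a corner of some ε-pixel of V. If the square grid graph G(V) admits a double turning Hamiltonian cycle, then the ε-checkering graph of V is connected. -/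
namespace DTHCproof

open Finset
open scoped Classical

lemma zmod2_cases : ∀ a : ZMod 2, a = 0 ∨ a = 1 := by decide
lemma zmod2_add_self : ∀ a : ZMod 2, a + a = 0 := by decide

lemma gridAdj_cases {u v : ℤ × ℤ} (h : GridAdj u v) :
    v = (u.1 + 1, u.2) ∨ v = (u.1 - 1, u.2) ∨ v = (u.1, u.2 + 1) ∨ v = (u.1, u.2 - 1) := by
  obtain ⟨u1, u2⟩ := u
  obtain ⟨v1, v2⟩ := v
  simp only [GridAdj, Prod.mk.injEq] at h ⊢
  omega

lemma gridAdj_ne {u v : ℤ × ℤ} (h : GridAdj u v) : u ≠ v := by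
  rintro rfl
  simp only [GridAdj] at h
  omega

variable {V : Finset (ℤ × ℤ)} (W : GridClosedWalk V)

instance : NeZero W.n := ⟨W.npos.ne'⟩

/-- horizontal edge with left endpoint `(i,j)` -/
def Hed (i j : ℤ) : Sym2 (ℤ × ℤ) := s((i,j),(i+1,j))
/-- vertical edge with bottom endpoint `(i,j)` -/
def Ved (i j : ℤ) : Sym2 (ℤ × ℤ) := s((i,j),(i,j+1))

noncomputable def ind (e : Sym2 (ℤ × ℤ)) : ZMod 2 := if e ∈ W.Edges then 1 else 0

lemma ind_of_mem {e : Sym2 (ℤ × ℤ)} (h : e ∈ W.Edges) : ind W e = 1 := if_pos h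
lemma ind_of_not_mem {e : Sym2 (ℤ × ℤ)} (h : e ∉ W.Edges) : ind W e = 0 := if_neg h

lemma edge_endpoints_mem {e : Sym2 (ℤ × ℤ)} (h : e ∈ W.Edges) {x : ℤ × ℤ} (hx : x ∈ e) :
    x ∈ V := by
  obtain ⟨k, rfl⟩ := h
  rcases Sym2.mem_iff.1 hx with h1 | h1 <;> rw [h1] <;> exact W.mem _

lemma hed_mem {i j : ℤ} (h : Hed i j ∈ W.Edges) : (i,j) ∈ V ∧ (i+1,j) ∈ V :=
  ⟨edge_endpoints_mem W h (by simp [Hed]), edge_endpoints_mem W h (by simp [Hed])⟩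

lemma ved_mem {i j : ℤ} (h : Ved i j ∈ W.Edges) : (i,j) ∈ V ∧ (i,j+1) ∈ V :=
  ⟨edge_endpoints_mem W h (by simp [Ved]), edge_endpoints_mem W h (by simp [Ved])⟩

end DTHCproof

namespace DTHCproof
open Finset
open scoped Classical
variable {V : Finset (ℤ × ℤ)} (W : GridClosedWalk V)

lemma gridAdj_cases' {u v : ℤ × ℤ} (h : GridAdj u v) :
    u = (v.1 + 1, v.2) ∨ u = (v.1 - 1, v.2) ∨ u = (v.1, v.2 + 1) ∨ u = (v.1, v.2 - 1) := by
  obtain ⟨u1, u2⟩ := u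
  obtain ⟨v1, v2⟩ := v
  simp only [GridAdj, Prod.mk.injEq] at h ⊢
  omega

lemma card_traverse_le_one (htrail : W.Trail) (e : Sym2 (ℤ × ℤ)) :
    (univ.filter (fun k : ZMod W.n => s(W.c k, W.c (k+1)) = e)).card ≤ 1 := by
  refine Finset.card_le_one.2 ?_
  intro a ha b hb
  simp only [mem_filter] at ha hb
  exact htrail a b (ha.2.trans hb.2.symm)

lemma ind_eq_card (htrail : W.Trail) (e : Sym2 (ℤ × ℤ)) :
    ind W e = ((univ.filter (fun k : ZMod W.n => s(W.c k, W.c (k+1)) = e)).card : ZMod 2) := by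
  by_cases h : e ∈ W.Edges
  · rw [ind_of_mem W h]
    obtain ⟨k, hk⟩ := h
    have h1 : (univ.filter (fun k : ZMod W.n => s(W.c k, W.c (k+1)) = e)).card = 1 := by
      refine le_antisymm (card_traverse_le_one W htrail e) ?_
      refine Finset.card_pos.2 ⟨k, ?_⟩
      simp [hk.symm]
    rw [h1, Nat.cast_one]
  · rw [ind_of_not_mem W h]
    have h1 : (univ.filter (fun k : ZMod W.n => s(W.c k, W.c (k+1)) = e)) = ∅ := by
      refine Finset.filter_eq_empty_iff.2 ?_
      intro k _ hk
      exact h ⟨k, hk.symm⟩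
    rw [h1]
    simp

/-- directed-traversal index sets -/
def Tr (a b : ℤ × ℤ) : Finset (ZMod W.n) :=
  univ.filter (fun k : ZMod W.n => W.c k = a ∧ W.c (k+1) = b)

lemma Tr_disjoint {a b a' b' : ℤ × ℤ} (h : a ≠ a' ∨ b ≠ b') :
    Disjoint (Tr W a b) (Tr W a' b') := by
  rw [Finset.disjoint_left]
  rintro k hk hk'
  simp only [Tr, mem_filter, mem_univ, true_and] at hk hk'
  rcases h with h | h
  · exact h (hk.1.symm.trans hk'.1)
  · exact h (hk.2.symm.trans hk'.2)

lemma card_S_eq (htrail : W.Trail) {a b : ℤ × ℤ} (hab : a ≠ b) :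
    (univ.filter (fun k : ZMod W.n => s(W.c k, W.c (k+1)) = s(a,b))).card
      = (Tr W a b).card + (Tr W b a).card := by
  rw [← Finset.card_union_of_disjoint (Tr_disjoint W (Or.inl hab))]
  congr 1
  ext k
  simp only [Tr, mem_filter, mem_union, mem_univ, true_and, Sym2.eq_iff]
  try tauto

lemma out_partition (x : ℤ × ℤ) :
    (univ.filter (fun k : ZMod W.n => W.c k = x)).card
      = ((Tr W x (x.1+1, x.2)).card + (Tr W x (x.1-1, x.2)).card)
        + ((Tr W x (x.1, x.2+1)).card + (Tr W x (x.1, x.2-1)).card) := by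
  obtain ⟨x1, x2⟩ := x
  have ne12 : ((x1:ℤ)+1, x2) ≠ ((x1:ℤ)-1, x2) := by
    intro h; simp only [Prod.mk.injEq] at h; omega
  have ne34 : ((x1:ℤ), x2+1) ≠ ((x1:ℤ), x2-1) := by
    intro h; simp only [Prod.mk.injEq] at h; omega
  have d12 : Disjoint (Tr W (x1,x2) ((x1:ℤ)+1, x2)) (Tr W (x1,x2) ((x1:ℤ)-1, x2)) :=
    Tr_disjoint W (Or.inr ne12)
  have d34 : Disjoint (Tr W (x1,x2) ((x1:ℤ), x2+1)) (Tr W (x1,x2) ((x1:ℤ), x2-1)) :=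
    Tr_disjoint W (Or.inr ne34)
  have dbig : Disjoint (Tr W (x1,x2) ((x1:ℤ)+1, x2) ∪ Tr W (x1,x2) ((x1:ℤ)-1, x2))
      (Tr W (x1,x2) ((x1:ℤ), x2+1) ∪ Tr W (x1,x2) ((x1:ℤ), x2-1)) := by
    refine Finset.disjoint_union_left.2 ⟨?_, ?_⟩ <;>
      refine Finset.disjoint_union_right.2 ⟨?_, ?_⟩ <;>
      refine Tr_disjoint W (Or.inr ?_) <;>
      (intro h; simp only [Prod.mk.injEq] at h; omega)
  rw [← Finset.card_union_of_disjoint d12, ← Finset.card_union_of_disjoint d34,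
    ← Finset.card_union_of_disjoint dbig]
  congr 1
  ext k
  simp only [Tr, mem_filter, mem_union, mem_univ, true_and]
  constructor
  · intro hk
    rcases gridAdj_cases (W.adj k) with h | h | h | h <;> rw [hk] at h <;> simp at h <;> tauto
  · tauto

lemma in_partition (x : ℤ × ℤ) :
    (univ.filter (fun k : ZMod W.n => W.c (k+1) = x)).card
      = ((Tr W (x.1+1, x.2) x).card + (Tr W (x.1-1, x.2) x).card)
        + ((Tr W (x.1, x.2+1) x).card + (Tr W (x.1, x.2-1) x).card) := by
  obtain ⟨x1, x2⟩ := x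
  have ne12 : ((x1:ℤ)+1, x2) ≠ ((x1:ℤ)-1, x2) := by
    intro h; simp only [Prod.mk.injEq] at h; omega
  have ne34 : ((x1:ℤ), x2+1) ≠ ((x1:ℤ), x2-1) := by
    intro h; simp only [Prod.mk.injEq] at h; omega
  have d12 : Disjoint (Tr W ((x1:ℤ)+1, x2) (x1,x2)) (Tr W ((x1:ℤ)-1, x2) (x1,x2)) :=
    Tr_disjoint W (Or.inl ne12)
  have d34 : Disjoint (Tr W ((x1:ℤ), x2+1) (x1,x2)) (Tr W ((x1:ℤ), x2-1) (x1,x2)) :=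
    Tr_disjoint W (Or.inl ne34)
  have dbig : Disjoint (Tr W ((x1:ℤ)+1, x2) (x1,x2) ∪ Tr W ((x1:ℤ)-1, x2) (x1,x2))
      (Tr W ((x1:ℤ), x2+1) (x1,x2) ∪ Tr W ((x1:ℤ), x2-1) (x1,x2)) := by
    refine Finset.disjoint_union_left.2 ⟨?_, ?_⟩ <;>
      refine Finset.disjoint_union_right.2 ⟨?_, ?_⟩ <;>
      refine Tr_disjoint W (Or.inl ?_) <;>
      (intro h; simp only [Prod.mk.injEq] at h; omega)
  rw [← Finset.card_union_of_disjoint d12, ← Finset.card_union_of_disjoint d34,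
    ← Finset.card_union_of_disjoint dbig]
  congr 1
  ext k
  simp only [Tr, mem_filter, mem_union, mem_univ, true_and]
  constructor
  · intro hk
    rcases gridAdj_cases' (W.adj k) with h | h | h | h <;> rw [hk] at h <;> simp at h <;> tauto
  · tauto

lemma in_card_eq_out_card (x : ℤ × ℤ) :
    (univ.filter (fun k : ZMod W.n => W.c (k+1) = x)).card
      = (univ.filter (fun k : ZMod W.n => W.c k = x)).card := by
  refine Finset.card_bij' (fun k _ => k + 1) (fun k _ => k - 1) ?_ ?_ ?_ ?_
  · intro k hk
    simp only [mem_filter, mem_univ, true_and] at hk ⊢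
    exact hk
  · intro k hk
    simp only [mem_filter, mem_univ, true_and] at hk ⊢
    rwa [sub_add_cancel]
  · intro k _
    show k + 1 - 1 = k
    exact add_sub_cancel_right k 1
  · intro k _
    show k - 1 + 1 = k
    exact sub_add_cancel k 1

lemma vertex_parity (htrail : W.Trail) (x : ℤ × ℤ) :
    ind W (Hed x.1 x.2) + ind W (Hed (x.1-1) x.2)
      + ind W (Ved x.1 x.2) + ind W (Ved x.1 (x.2-1)) = 0 := by
  have eR : Hed x.1 x.2 = s(x, (x.1+1, x.2)) := by rw [Hed]
  have eL : Hed (x.1-1) x.2 = s((x.1-1, x.2), x) := by rw [Hed]; norm_num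
  have eU : Ved x.1 x.2 = s(x, (x.1, x.2+1)) := by rw [Ved]
  have eD : Ved x.1 (x.2-1) = s((x.1, x.2-1), x) := by rw [Ved]; norm_num
  have hR : x ≠ (x.1+1, x.2) := by intro h; simp [Prod.ext_iff] at h; try omega
  have hL : (x.1-1, x.2) ≠ x := by intro h; simp [Prod.ext_iff] at h; try omega
  have hU : x ≠ (x.1, x.2+1) := by intro h; simp [Prod.ext_iff] at h; try omega
  have hD : (x.1, x.2-1) ≠ x := by intro h; simp [Prod.ext_iff] at h; try omega
  rw [eR, eL, eU, eD, ind_eq_card W htrail, ind_eq_card W htrail,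
    ind_eq_card W htrail, ind_eq_card W htrail,
    card_S_eq W htrail hR, card_S_eq W htrail hL, card_S_eq W htrail hU,
    card_S_eq W htrail hD]
  push_cast
  have key : ((Tr W x (x.1+1,x.2)).card + (Tr W (x.1+1,x.2) x).card : ZMod 2)
      + ((Tr W (x.1-1,x.2) x).card + (Tr W x (x.1-1,x.2)).card)
      + ((Tr W x (x.1,x.2+1)).card + (Tr W (x.1,x.2+1) x).card)
      + ((Tr W (x.1,x.2-1) x).card + (Tr W x (x.1,x.2-1)).card)
      = ((univ.filter (fun k : ZMod W.n => W.c k = x)).card : ZMod 2)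
        + ((univ.filter (fun k : ZMod W.n => W.c (k+1) = x)).card : ZMod 2) := by
    rw [out_partition W x, in_partition W x]
    push_cast
    ring
  rw [key, in_card_eq_out_card W x]
  exact zmod2_add_self _

end DTHCproof

namespace DTHCproof
open Finset
open scoped Classical
variable {V : Finset (ℤ × ℤ)} (W : GridClosedWalk V)

lemma zmod2_eq_of_add_eq_zero : ∀ a b : ZMod 2, a + b = 0 → a = b := by decide

noncomputable def xmin (hne : V.Nonempty) : ℤ := (V.image Prod.fst).min' (hne.image _)
noncomputable def xmax (hne : V.Nonempty) : ℤ := (V.image Prod.fst).max' (hne.image _)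
noncomputable def ymin (hne : V.Nonempty) : ℤ := (V.image Prod.snd).min' (hne.image _)
noncomputable def ymax (hne : V.Nonempty) : ℤ := (V.image Prod.snd).max' (hne.image _)

lemma mem_bounds (hne : V.Nonempty) {v : ℤ × ℤ} (hv : v ∈ V) :
    xmin hne ≤ v.1 ∧ v.1 ≤ xmax hne ∧ ymin hne ≤ v.2 ∧ v.2 ≤ ymax hne :=
  ⟨Finset.min'_le _ _ (Finset.mem_image_of_mem _ hv),
   Finset.le_max' _ _ (Finset.mem_image_of_mem _ hv),
   Finset.min'_le _ _ (Finset.mem_image_of_mem _ hv),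
   Finset.le_max' _ _ (Finset.mem_image_of_mem _ hv)⟩

/-- interior indicator of the pixel with lower-left corner (i,j) -/
noncomputable def F (hne : V.Nonempty) (i j : ℤ) : ZMod 2 :=
  ∑ m ∈ Finset.Icc (ymin hne) j, ind W (Hed i m)

variable (hne : V.Nonempty)

lemma hed_bounds {i m : ℤ} (h : Hed i m ∈ W.Edges) :
    xmin hne ≤ i ∧ i + 1 ≤ xmax hne ∧ ymin hne ≤ m ∧ m ≤ ymax hne := by
  obtain ⟨h1, h2⟩ := hed_mem W h
  have b1 := mem_bounds hne h1
  have b2 := mem_bounds hne h2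
  simp only at b1 b2
  exact ⟨b1.1, b2.2.1, b1.2.2.1, b1.2.2.2⟩

lemma ved_bounds {i m : ℤ} (h : Ved i m ∈ W.Edges) :
    xmin hne ≤ i ∧ i ≤ xmax hne ∧ ymin hne ≤ m ∧ m + 1 ≤ ymax hne := by
  obtain ⟨h1, h2⟩ := ved_mem W h
  have b1 := mem_bounds hne h1
  have b2 := mem_bounds hne h2
  simp only at b1 b2
  exact ⟨b1.1, b1.2.1, b1.2.2.1, b2.2.2.2⟩

lemma F_low {i j : ℤ} (h : j < ymin hne) : F W hne i j = 0 := by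
  rw [F]
  rw [Finset.Icc_eq_empty (by omega)]
  rfl

lemma F_succ (i j : ℤ) : F W hne i (j+1) = F W hne i j + ind W (Hed i (j+1)) := by
  rcases lt_or_ge (j+1) (ymin hne) with h | h
  · rw [F_low W hne h, F_low W hne (by omega), ind_of_not_mem]
    · rfl
    · intro hmem
      have := (hed_bounds W hne hmem).2.2.1
      omega
  · have hIcc : Finset.Icc (ymin hne) (j+1) = insert (j+1) (Finset.Icc (ymin hne) j) := by
      ext m
      simp only [Finset.mem_Icc, Finset.mem_insert]
      omega
    have hnot : (j+1) ∉ Finset.Icc (ymin hne) j := by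
      simp only [Finset.mem_Icc]
      omega
    rw [F, hIcc, Finset.sum_insert hnot, add_comm, F]

lemma ind_hed_eq (i j : ℤ) : ind W (Hed i j) = F W hne i (j-1) + F W hne i j := by
  have h := F_succ W hne i (j-1)
  rw [sub_add_cancel] at h
  exact (by decide : ∀ a b c : ZMod 2, a = b + c → c = b + a) _ _ _ h

lemma F_flip_h (htrail : W.Trail) (i j : ℤ) :
    F W hne i j + F W hne (i+1) j + ind W (Ved (i+1) j) = 0 := by
  rcases lt_or_ge j (ymin hne) with h | h
  · rw [F_low W hne h, F_low W hne h, ind_of_not_mem]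
    · rfl
    · intro hmem
      have := (ved_bounds W hne hmem).2.2.1
      omega
  · have h' : ymin hne - 1 ≤ j := by omega
    clear h
    refine Int.le_induction
      (motive := fun n _ => F W hne i n + F W hne (i+1) n + ind W (Ved (i+1) n) = 0) ?_ ?_ j h'
    · beta_reduce
      rw [F_low W hne (by omega), F_low W hne (by omega), ind_of_not_mem]
      · rfl
      · intro hmem
        have := (ved_bounds W hne hmem).2.2.1
        omega
    · intro j hj ih
      beta_reduce
      have vp := vertex_parity W htrail ((i+1), (j+1))
      simp only [add_sub_cancel_right] at vp
      rw [F_succ W hne, F_succ W hne]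
      exact (by decide : ∀ a b h1 h2 v' v : ZMod 2, a + b + v = 0 →
        h2 + h1 + v' + v = 0 → (a + h1) + (b + h2) + v' = 0) _ _ _ _ _ _ ih vp

lemma ind_ved_eq (htrail : W.Trail) (i j : ℤ) :
    ind W (Ved i j) = F W hne (i-1) j + F W hne i j := by
  have h := F_flip_h W hne htrail (i-1) j
  rw [sub_add_cancel] at h
  exact (by decide : ∀ a b c : ZMod 2, a + b + c = 0 → c = a + b) _ _ _ h

lemma F_col_out {i : ℤ} (h : i < xmin hne ∨ xmax hne ≤ i) (j : ℤ) : F W hne i j = 0 := by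
  rw [F]
  refine Finset.sum_eq_zero ?_
  intro m _
  rw [ind_of_not_mem]
  intro hmem
  have h1 := (hed_bounds W hne hmem).1
  have h2 := (hed_bounds W hne hmem).2.1
  omega

lemma F_top_zero (htrail : W.Trail) (i : ℤ) : F W hne i (ymax hne) = 0 := by
  rcases lt_or_ge i (xmin hne) with h | h
  · exact F_col_out W hne (Or.inl h) _
  · have h' : xmin hne - 1 ≤ i := by omega
    clear h
    refine Int.le_induction (motive := fun n _ => F W hne n (ymax hne) = 0) ?_ ?_ i h'
    · exact F_col_out W hne (Or.inl (by omega)) _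
    · intro i hi ih
      beta_reduce
      have h := F_flip_h W hne htrail i (ymax hne)
      rw [ih, ind_of_not_mem] at h
      · exact (by decide : ∀ a : ZMod 2, 0 + a + 0 = 0 → a = 0) _ h
      · intro hmem
        have := (ved_bounds W hne hmem).2.2.2
        omega

lemma F_high (htrail : W.Trail) {j : ℤ} (h : ymax hne ≤ j) (i : ℤ) : F W hne i j = 0 := by
  refine Int.le_induction (motive := fun n _ => F W hne i n = 0) ?_ ?_ j h
  · exact F_top_zero W hne htrail i
  · intro j hj ih
    beta_reduce
    rw [F_succ W hne, ih, ind_of_not_mem]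
    · rfl
    · intro hmem
      have := (hed_bounds W hne hmem).2.2.2
      omega

lemma F_vanish (htrail : W.Trail) {i j : ℤ}
    (h : i < xmin hne ∨ xmax hne ≤ i ∨ j < ymin hne ∨ ymax hne ≤ j) : F W hne i j = 0 := by
  rcases h with h | h | h | h
  · exact F_col_out W hne (Or.inl h) _
  · exact F_col_out W hne (Or.inr h) _
  · exact F_low W hne h
  · exact F_high W hne htrail h _

end DTHCproof

namespace DTHCproof
open Finset
open scoped Classical
variable {V : Finset (ℤ × ℤ)} (W : GridClosedWalk V) (hne : V.Nonempty)

lemma notmem_cells (htrail : W.Trail) {y1 y2 : ℤ} (hy : (y1, y2) ∉ V) :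
    F W hne (y1-1) y2 = F W hne y1 y2 ∧ F W hne y1 (y2-1) = F W hne y1 y2 ∧
      F W hne (y1-1) (y2-1) = F W hne y1 y2 := by
  have e1 : ind W (Ved y1 y2) = 0 := by
    refine ind_of_not_mem W ?_
    intro hmem
    exact hy (ved_mem W hmem).1
  have e2 : ind W (Hed y1 y2) = 0 := by
    refine ind_of_not_mem W ?_
    intro hmem
    exact hy (hed_mem W hmem).1
  have e3 : ind W (Hed (y1-1) y2) = 0 := by
    refine ind_of_not_mem W ?_
    intro hmem
    have := (hed_mem W hmem).2
    rw [sub_add_cancel] at this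
    exact hy this
  have h1 := ind_ved_eq W hne htrail y1 y2
  rw [e1] at h1
  have h2 := ind_hed_eq W hne y1 y2
  rw [e2] at h2
  have h3 := ind_hed_eq W hne (y1-1) y2
  rw [e3] at h3
  have d : ∀ a b : ZMod 2, (0 : ZMod 2) = a + b → a = b := by decide
  have r1 := d _ _ h1
  have r2 := d _ _ h2
  have r3 := d _ _ h3
  exact ⟨r1, r2, r3.trans r1⟩

lemma notmem_step (htrail : W.Trail) {b w : ℤ × ℤ} (hadj : GridAdj b w)
    (hb : b ∉ V) (hw : w ∉ V) : F W hne b.1 b.2 = F W hne w.1 w.2 := by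
  obtain ⟨b1, b2⟩ := b
  obtain ⟨w1, w2⟩ := w
  rcases gridAdj_cases hadj with h | h | h | h <;>
    simp only [Prod.mk.injEq] at h <;>
    obtain ⟨rfl, rfl⟩ := h
  · have := (notmem_cells W hne htrail hw).1
    rwa [add_sub_cancel_right] at this
  · exact ((notmem_cells W hne htrail hb).1).symm
  · have := (notmem_cells W hne htrail hw).2.1
    rwa [add_sub_cancel_right] at this
  · exact ((notmem_cells W hne htrail hb).2.1).symm

lemma F_outside_zero (htrail : W.Trail) (hsolid : Solid V) {y : ℤ × ℤ} (hy : y ∉ V) :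
    F W hne y.1 y.2 = 0 := by
  set S := {w : ℤ × ℤ | Relation.ReflTransGen
      (fun a b => GridAdj a b ∧ a ∉ V ∧ b ∉ V) y w} with hS
  have hconst : ∀ w ∈ S, w ∉ V ∧ F W hne w.1 w.2 = F W hne y.1 y.2 := by
    intro w hw
    induction hw with
    | refl => exact ⟨hy, rfl⟩
    | tail _ hbc ih =>
      obtain ⟨hadj, hbV, hwV⟩ := hbc
      exact ⟨hwV, (notmem_step W hne htrail hadj hbV hwV).symm.trans ih.2⟩
  have hinf : S.Infinite := hsolid y hy
  set box : Finset (ℤ × ℤ) := Finset.Icc (xmin hne) (xmax hne) ×ˢ Finset.Icc (ymin hne) (ymax hne)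
    with hbox
  obtain ⟨w, hwS, hwbox⟩ : ∃ w ∈ S, w ∉ (box : Set (ℤ × ℤ)) := by
    by_contra hall
    push_neg at hall
    exact hinf (Set.Finite.subset box.finite_toSet hall)
  have h0 : F W hne w.1 w.2 = 0 := by
    refine F_vanish W hne htrail ?_
    simp only [hbox, Finset.coe_product, Set.mem_prod, Finset.mem_coe, Finset.mem_Icc,
      not_and_or, not_and, not_le] at hwbox
    omega
  rw [← (hconst w hwS).2, h0]

lemma pixel_of_F (htrail : W.Trail) (hsolid : Solid V) {i j : ℤ} (hF : F W hne i j = 1) :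
    Pixel V (i, j) := by
  have one_ne : (1 : ZMod 2) ≠ 0 := by decide
  refine ⟨?_, ?_, ?_, ?_⟩ <;> by_contra hy
  · have h0 := F_outside_zero W hne htrail hsolid hy
    simp only at h0
    rw [hF] at h0
    exact one_ne h0
  · have h0 := F_outside_zero W hne htrail hsolid hy
    have heq := (notmem_cells W hne htrail (y1 := i+1) (y2 := j) hy).1
    rw [add_sub_cancel_right] at heq
    simp only at h0
    rw [heq, h0] at hF
    exact one_ne hF.symm
  · have h0 := F_outside_zero W hne htrail hsolid hy
    have heq := (notmem_cells W hne htrail (y1 := i) (y2 := j+1) hy).2.1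
    rw [add_sub_cancel_right] at heq
    simp only at h0
    rw [heq, h0] at hF
    exact one_ne hF.symm
  · have h0 := F_outside_zero W hne htrail hsolid hy
    have heq := (notmem_cells W hne htrail (y1 := i+1) (y2 := j+1) hy).2.2
    rw [add_sub_cancel_right, add_sub_cancel_right] at heq
    simp only at h0
    rw [heq, h0] at hF
    exact one_ne hF.symm

end DTHCproof

namespace DTHCproof
open Finset
open scoped Classical
variable {V : Finset (ℤ × ℤ)} (W : GridClosedWalk V) (hne : V.Nonempty)

/-- the checkering parity of the `ε`-side cell of an edge -/
noncomputable def edgeP (u v : ℤ × ℤ) : ZMod 2 :=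
  if u.1 + u.2 < v.1 + v.2 then ((u.1 + u.2 + 1 : ℤ) : ZMod 2) + F W hne u.1 u.2
  else ((v.1 + v.2 + 1 : ℤ) : ZMod 2) + F W hne v.1 v.2

noncomputable def Pk (k : ZMod W.n) : ZMod 2 := edgeP W hne (W.c k) (W.c (k+1))

lemma edgeP_eR (i j : ℤ) :
    edgeP W hne (i,j) (i+1,j) = ((i + j : ℤ) : ZMod 2) + 1 + F W hne i j := by
  rw [edgeP, if_pos (by dsimp only; omega)]
  push_cast
  ring
lemma edgeP_eL (i j : ℤ) :
    edgeP W hne (i,j) (i-1,j) = ((i + j : ℤ) : ZMod 2) + F W hne (i-1) j := by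
  rw [edgeP, if_neg (by dsimp only; omega)]
  push_cast
  ring
lemma edgeP_eU (i j : ℤ) :
    edgeP W hne (i,j) (i,j+1) = ((i + j : ℤ) : ZMod 2) + 1 + F W hne i j := by
  rw [edgeP, if_pos (by dsimp only; omega)]
  push_cast
  ring
lemma edgeP_eD (i j : ℤ) :
    edgeP W hne (i,j) (i,j-1) = ((i + j : ℤ) : ZMod 2) + F W hne i (j-1) := by
  rw [edgeP, if_neg (by dsimp only; omega)]
  push_cast
  ring
lemma edgeP_fR (i j : ℤ) :
    edgeP W hne (i+1,j) (i,j) = ((i + j : ℤ) : ZMod 2) + 1 + F W hne i j := by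
  rw [edgeP, if_neg (by dsimp only; omega)]
  push_cast
  ring
lemma edgeP_fL (i j : ℤ) :
    edgeP W hne (i-1,j) (i,j) = ((i + j : ℤ) : ZMod 2) + F W hne (i-1) j := by
  rw [edgeP, if_pos (by dsimp only; omega)]
  push_cast
  ring
lemma edgeP_fU (i j : ℤ) :
    edgeP W hne (i,j+1) (i,j) = ((i + j : ℤ) : ZMod 2) + 1 + F W hne i j := by
  rw [edgeP, if_neg (by dsimp only; omega)]
  push_cast
  ring
lemma edgeP_fD (i j : ℤ) :
    edgeP W hne (i,j-1) (i,j) = ((i + j : ℤ) : ZMod 2) + F W hne i (j-1) := by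
  rw [edgeP, if_pos (by dsimp only; omega)]
  push_cast
  ring

lemma key1 : ∀ c f g : ZMod 2, 1 = f + g → c + f = c + 1 + g := by decide
lemma key2 : ∀ c f g : ZMod 2, 1 = f + g → c + 1 + g = c + f := by decide
lemma key3 : ∀ c f g h : ZMod 2, 1 = h + f → 1 = h + g → c + g = c + f := by decide

lemma Pk_step (htrail : W.Trail) (hturn : W.Turning) (k : ZMod W.n) :
    Pk W hne (k+1) = Pk W hne k := by
  have hx2 : (k+1+1 : ZMod W.n) = k + 2 := by ring
  have perp := hturn k
  rw [← hx2] at perp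
  have adj1 := W.adj k
  have adj2 := W.adj (k+1)
  have he1 : s(W.c k, W.c (k+1)) ∈ W.Edges := ⟨k, rfl⟩
  have he2 : s(W.c (k+1), W.c (k+1+1)) ∈ W.Edges := ⟨k+1, rfl⟩
  rw [Pk, Pk]
  set a := W.c k with ha
  set x := W.c (k+1) with hxx
  set b := W.c (k+1+1) with hb
  clear_value a x b
  clear ha hxx hb hx2
  obtain ⟨x1, x2⟩ := x
  rcases gridAdj_cases' adj1 with h1 | h1 | h1 | h1 <;>
    rcases gridAdj_cases adj2 with h2 | h2 | h2 | h2 <;>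
      simp only at h1 h2 <;> subst h1 <;> subst h2 <;>
      simp only [Perp, Prod.mk.injEq] at perp <;> try omega
  -- case (R, U)
  · rw [edgeP_eU, edgeP_fR]
  -- case (R, D)
  · rw [edgeP_eD, edgeP_fR]
    have hind : ind W (Hed x1 x2) = 1 := by
      rw [Sym2.eq_swap] at he1
      exact ind_of_mem W he1
    have hflip := ind_hed_eq W hne x1 x2
    rw [hind] at hflip
    exact key1 _ _ _ hflip
  -- case (L, U)
  · rw [edgeP_eU, edgeP_fL]
    have hind : ind W (Ved x1 x2) = 1 := ind_of_mem W he2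
    have hflip := ind_ved_eq W hne htrail x1 x2
    rw [hind] at hflip
    exact key2 _ _ _ hflip
  -- case (L, D)
  · rw [edgeP_eD, edgeP_fL]
    have hc1 : (x1 - 1 + 1 : ℤ) = x1 := by ring
    have hc2 : (x2 - 1 + 1 : ℤ) = x2 := by ring
    have hind1 : ind W (Hed (x1-1) x2) = 1 := by
      rw [Hed, hc1]
      exact ind_of_mem W he1
    have hind2 : ind W (Ved x1 (x2-1)) = 1 := by
      rw [Ved, hc2, Sym2.eq_swap]
      exact ind_of_mem W he2
    have hflip1 := ind_hed_eq W hne (x1-1) x2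
    rw [hind1] at hflip1
    have hflip2 := ind_ved_eq W hne htrail x1 (x2-1)
    rw [hind2] at hflip2
    exact key3 _ _ _ _ hflip1 hflip2
  -- case (U, R)
  · rw [edgeP_eR, edgeP_fU]
  -- case (U, L)
  · rw [edgeP_eL, edgeP_fU]
    have hind : ind W (Ved x1 x2) = 1 := by
      rw [Sym2.eq_swap] at he1
      exact ind_of_mem W he1
    have hflip := ind_ved_eq W hne htrail x1 x2
    rw [hind] at hflip
    exact key1 _ _ _ hflip
  -- case (D, R)
  · rw [edgeP_eR, edgeP_fD]
    have hind : ind W (Hed x1 x2) = 1 := ind_of_mem W he2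
    have hflip := ind_hed_eq W hne x1 x2
    rw [hind] at hflip
    exact key2 _ _ _ hflip
  -- case (D, L)
  · rw [edgeP_eL, edgeP_fD]
    have hc1 : (x1 - 1 + 1 : ℤ) = x1 := by ring
    have hc2 : (x2 - 1 + 1 : ℤ) = x2 := by ring
    have hind1 : ind W (Ved x1 (x2-1)) = 1 := by
      rw [Ved, hc2]
      exact ind_of_mem W he1
    have hind2 : ind W (Hed (x1-1) x2) = 1 := by
      rw [Hed, hc1, Sym2.eq_swap]
      exact ind_of_mem W he2
    have hflip1 := ind_ved_eq W hne htrail x1 (x2-1)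
    rw [hind1] at hflip1
    have hflip2 := ind_hed_eq W hne (x1-1) x2
    rw [hind2] at hflip2
    exact key3 _ _ _ _ hflip1 hflip2

lemma Pk_const (htrail : W.Trail) (hturn : W.Turning) (k k' : ZMod W.n) :
    Pk W hne k = Pk W hne k' := by
  have step : ∀ (m : ℕ) (k : ZMod W.n), Pk W hne (k + m) = Pk W hne k := by
    intro m
    induction m with
    | zero => intro k; simp
    | succ m ih =>
      intro k
      have : (k + (m+1 : ℕ) : ZMod W.n) = (k + m) + 1 := by push_cast; ring
      rw [this, Pk_step W hne htrail hturn, ih]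
  have hrepr : k + ((k' - k).val : ZMod W.n) = k' := by
    rw [ZMod.natCast_val, ZMod.cast_id]
    ring
  calc Pk W hne k = Pk W hne (k + ((k' - k).val : ZMod W.n)) := (step _ k).symm
    _ = Pk W hne k' := by rw [hrepr]

end DTHCproof

namespace DTHCproof
open Finset
open scoped Classical
variable {V : Finset (ℤ × ℤ)} (W : GridClosedWalk V) (hne : V.Nonempty)

lemma hone : ∀ a b : ZMod 2, (1 : ZMod 2) = a + b → a = 1 ∨ b = 1 := by decide

lemma castp {z w : ℤ} (h : z % 2 = w % 2) : ((z : ℤ) : ZMod 2) = ((w : ℤ) : ZMod 2) :=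
  (ZMod.intCast_eq_intCast_iff z w 2).2 h

lemma exists_index (hvis : ∀ v ∈ V, 1 ≤ W.visits v) {v : ℤ × ℤ} (hv : v ∈ V) :
    ∃ k, W.c k = v := by
  have h := hvis v hv
  rw [GridClosedWalk.visits] at h
  obtain ⟨k, hk⟩ := Finset.card_pos.1 h
  exact ⟨k, (mem_filter.1 hk).2⟩

lemma vertex_flip (hvis : ∀ v ∈ V, 1 ≤ W.visits v) (htrail : W.Trail)
    {v1 v2 : ℤ} (hv : (v1, v2) ∈ V) :
    (1 : ZMod 2) = F W hne v1 (v2-1) + F W hne v1 v2 ∨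
    (1 : ZMod 2) = F W hne (v1-1) (v2-1) + F W hne (v1-1) v2 ∨
    (1 : ZMod 2) = F W hne (v1-1) v2 + F W hne v1 v2 ∨
    (1 : ZMod 2) = F W hne (v1-1) (v2-1) + F W hne v1 (v2-1) := by
  obtain ⟨k, hk⟩ := exists_index W hvis hv
  have he : s(((v1 : ℤ), (v2 : ℤ)), W.c (k+1)) ∈ W.Edges := ⟨k, by rw [hk]⟩
  have adj : GridAdj (v1, v2) (W.c (k+1)) := by rw [← hk]; exact W.adj k
  have hc1 : (v1 - 1 + 1 : ℤ) = v1 := by ring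
  have hc2 : (v2 - 1 + 1 : ℤ) = v2 := by ring
  rcases gridAdj_cases adj with h | h | h | h <;> rw [h] at he
  · left
    have hind : ind W (Hed v1 v2) = 1 := ind_of_mem W he
    have heq := ind_hed_eq W hne v1 v2
    rw [hind] at heq
    exact heq
  · right; left
    have hind : ind W (Hed (v1-1) v2) = 1 := by
      rw [Hed, hc1, Sym2.eq_swap]
      exact ind_of_mem W he
    have heq := ind_hed_eq W hne (v1-1) v2
    rw [hind] at heq
    exact heq
  · right; right; left
    have hind : ind W (Ved v1 v2) = 1 := ind_of_mem W he
    have heq := ind_ved_eq W hne htrail v1 v2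
    rw [hind] at heq
    exact heq
  · right; right; right
    have hind : ind W (Ved v1 (v2-1)) = 1 := by
      rw [Ved, hc2, Sym2.eq_swap]
      exact ind_of_mem W he
    have heq := ind_ved_eq W hne htrail v1 (v2-1)
    rw [hind] at heq
    exact heq

lemma lex_max (S : Finset (ℤ × ℤ)) (hS : S.Nonempty) :
    ∃ a b : ℤ, (a, b) ∈ S ∧ (∀ p ∈ S, p.2 ≤ b) ∧ (∀ p ∈ S, p.2 = b → p.1 ≤ a) := by
  classical
  set b := (S.image Prod.snd).max' (hS.image _) with hb
  have hble : ∀ p ∈ S, p.2 ≤ b := fun p hp =>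
    Finset.le_max' _ _ (Finset.mem_image_of_mem Prod.snd hp)
  have hRne : (S.filter (fun p => p.2 = b)).Nonempty := by
    have hmem := Finset.max'_mem (S.image Prod.snd) (hS.image _)
    rw [Finset.mem_image] at hmem
    obtain ⟨p, hp, hp2⟩ := hmem
    exact ⟨p, Finset.mem_filter.2 ⟨hp, hp2⟩⟩
  set a := ((S.filter (fun p => p.2 = b)).image Prod.fst).max' (hRne.image _) with ha
  have hale : ∀ p ∈ S, p.2 = b → p.1 ≤ a := fun p hp hpb =>
    Finset.le_max' _ _ (Finset.mem_image_of_mem Prod.fst (Finset.mem_filter.2 ⟨hp, hpb⟩))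
  have hmem : a ∈ (S.filter (fun p => p.2 = b)).image Prod.fst := Finset.max'_mem _ _
  rw [Finset.mem_image] at hmem
  obtain ⟨p, hp, hp1⟩ := hmem
  have hp' := Finset.mem_filter.1 hp
  refine ⟨a, b, ?_, hble, hale⟩
  have hpe : p = (a, b) := Prod.ext hp1 hp'.2
  rw [← hpe]
  exact hp'.1

set_option maxHeartbeats 2000000 in
lemma Pk_eq_eps (htrail : W.Trail) (hturn : W.Turning) (hvis : ∀ v ∈ V, 1 ≤ W.visits v)
    (hsolid : Solid V) (ε : ZMod 2)
    (hcover : ∀ v ∈ V, ∃ p : ℤ × ℤ, EpsPixel V ε p ∧ v ∈ pixelCorners p)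
    (k : ZMod W.n) : Pk W hne k = ε := by
  classical
  set Supp : Finset (ℤ × ℤ) :=
    (Finset.Icc (xmin hne) (xmax hne) ×ˢ Finset.Icc (ymin hne) (ymax hne)).filter
      (fun p => F W hne p.1 p.2 = 1) with hSupp
  have supp_complete : ∀ {i j : ℤ}, F W hne i j = 1 → (i, j) ∈ Supp := by
    intro i j hF
    have h1 : ¬ (i < xmin hne) := fun h => by
      rw [F_vanish W hne htrail (Or.inl h)] at hF; exact absurd hF (by decide)
    have h2 : ¬ (xmax hne ≤ i) := fun h => by
      rw [F_vanish W hne htrail (Or.inr (Or.inl h))] at hF; exact absurd hF (by decide)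
    have h3 : ¬ (j < ymin hne) := fun h => by
      rw [F_vanish W hne htrail (Or.inr (Or.inr (Or.inl h)))] at hF; exact absurd hF (by decide)
    have h4 : ¬ (ymax hne ≤ j) := fun h => by
      rw [F_vanish W hne htrail (Or.inr (Or.inr (Or.inr h)))] at hF; exact absurd hF (by decide)
    refine mem_filter.2 ⟨Finset.mem_product.2 ⟨Finset.mem_Icc.2 ⟨by omega, by omega⟩,
      Finset.mem_Icc.2 ⟨by omega, by omega⟩⟩, hF⟩
  have hSne : Supp.Nonempty := by
    have hv0 : ((W.c 0).1, (W.c 0).2) ∈ V := by rw [Prod.mk.eta]; exact W.mem 0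
    have h0 := vertex_flip W hne hvis htrail hv0
    rcases h0 with h | h | h | h <;> rcases hone _ _ h with h1 | h1 <;>
      exact ⟨_, supp_complete h1⟩
  obtain ⟨aa, bb, haMem, hble, hale⟩ := lex_max Supp hSne
  have hFab : F W hne aa bb = 1 := (mem_filter.1 haMem).2
  have hzero : ∀ i j : ℤ, (bb < j ∨ (j = bb ∧ aa < i)) → F W hne i j = 0 := by
    intro i j hcond
    rcases zmod2_cases (F W hne i j) with h | h
    · exact h
    · exfalso
      have hmem := supp_complete h
      rcases hcond with hlt | ⟨rfl, hlt⟩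
      · have := hble _ hmem
        simp only at this
        omega
      · have := hale _ hmem rfl
        simp only at this
        omega
  have hpixab := pixel_of_F W hne htrail hsolid hFab
  have h4 : ((aa + 1 : ℤ), (bb + 1 : ℤ)) ∈ V := hpixab.2.2.2
  have hparity : ((aa + bb : ℤ) : ZMod 2) = ε := by
    by_contra hbad
    obtain ⟨p, ⟨hpix, hpar⟩, hc⟩ := hcover (aa+1, bb+1) h4
    obtain ⟨p1, p2⟩ := p
    simp only [pixelCorners, Set.mem_insert_iff, Set.mem_singleton_iff, Prod.mk.injEq] at hc
    rcases hc with ⟨h1, h2⟩ | ⟨h1, h2⟩ | ⟨h1, h2⟩ | ⟨h1, h2⟩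
    · -- p = (aa+1, bb+1)
      have e1 : p1 = aa + 1 := by omega
      have e2 : p2 = bb + 1 := by omega
      rw [e1, e2] at hpar
      refine hbad ?_
      rw [← hpar]
      exact castp (by omega)
    · -- p = (aa, bb+1)
      have e1 : p1 = aa := by omega
      have e2 : p2 = bb + 1 := by omega
      rw [e1, e2] at hpix
      have hw : ((aa : ℤ), (bb + 1 + 1 : ℤ)) ∈ V := hpix.2.2.1
      have hflip := vertex_flip W hne hvis htrail hw
      have z1 : F W hne aa (bb+1+1-1) = 0 := hzero _ _ (by omega)
      have z2 : F W hne aa (bb+1+1) = 0 := hzero _ _ (by omega)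
      have z3 : F W hne (aa-1) (bb+1+1-1) = 0 := hzero _ _ (by omega)
      have z4 : F W hne (aa-1) (bb+1+1) = 0 := hzero _ _ (by omega)
      rcases hflip with h | h | h | h <;> simp only [z1, z2, z3, z4] at h <;>
        exact absurd h (by decide)
    · -- p = (aa+1, bb)
      have e1 : p1 = aa + 1 := by omega
      have e2 : p2 = bb := by omega
      rw [e1, e2] at hpix
      have hw : ((aa + 1 + 1 : ℤ), (bb + 1 : ℤ)) ∈ V := hpix.2.2.2
      have hflip := vertex_flip W hne hvis htrail hw
      have z1 : F W hne (aa+1+1) (bb+1-1) = 0 := hzero _ _ (by omega)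
      have z2 : F W hne (aa+1+1) (bb+1) = 0 := hzero _ _ (by omega)
      have z3 : F W hne (aa+1+1-1) (bb+1-1) = 0 := hzero _ _ (by omega)
      have z4 : F W hne (aa+1+1-1) (bb+1) = 0 := hzero _ _ (by omega)
      rcases hflip with h | h | h | h <;> simp only [z1, z2, z3, z4] at h <;>
        exact absurd h (by decide)
    · -- p = (aa, bb)
      have e1 : p1 = aa := by omega
      have e2 : p2 = bb := by omega
      rw [e1, e2] at hpar
      exact hbad hpar
  -- the top edge of the cell (aa, bb) is a good edge
  have hindtop : ind W (Hed aa (bb+1)) = 1 := by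
    have h := ind_hed_eq W hne aa (bb+1)
    rw [add_sub_cancel_right, hFab, hzero aa (bb+1) (Or.inl (by omega)), add_zero] at h
    exact h
  have hetop : Hed aa (bb+1) ∈ W.Edges := by
    by_contra hnot
    rw [ind_of_not_mem W hnot] at hindtop
    exact absurd hindtop (by decide)
  obtain ⟨k0, hk0⟩ := hetop
  have hPk0 : Pk W hne k0 = ε := by
    rw [Pk]
    rw [Hed] at hk0
    rcases Sym2.eq_iff.1 hk0 with ⟨hp1, hp2⟩ | ⟨hp1, hp2⟩
    · rw [← hp1, ← hp2, edgeP_eR, hzero aa (bb+1) (Or.inl (by omega)), ← hparity]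
      have hcast : ((aa + (bb+1) : ℤ) : ZMod 2) = ((aa + bb : ℤ) : ZMod 2) + 1 := by
        push_cast; ring
      rw [hcast]
      exact (by decide : ∀ c : ZMod 2, c + 1 + 1 + 0 = c) _
    · rw [← hp1, ← hp2, edgeP_fR, hzero aa (bb+1) (Or.inl (by omega)), ← hparity]
      have hcast : ((aa + (bb+1) : ℤ) : ZMod 2) = ((aa + bb : ℤ) : ZMod 2) + 1 := by
        push_cast; ring
      rw [hcast]
      exact (by decide : ∀ c : ZMod 2, c + 1 + 1 + 0 = c) _
  exact (Pk_const W hne htrail hturn k k0).trans hPk0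

end DTHCproof

namespace DTHCproof
open Finset
open scoped Classical
variable {V : Finset (ℤ × ℤ)} (W : GridClosedWalk V)

lemma corner_mem (p q : ℤ × ℤ)
    (h : (q = p ∨ (q.1 = p.1 + 1 ∧ q.2 = p.2) ∨ (q.1 = p.1 ∧ q.2 = p.2 + 1) ∨
      (q.1 = p.1 + 1 ∧ q.2 = p.2 + 1))) : q ∈ pixelCorners p := by
  obtain ⟨q1, q2⟩ := q
  obtain ⟨p1, p2⟩ := p
  simp only [pixelCorners, Set.mem_insert_iff, Set.mem_singleton_iff, Prod.mk.injEq] at h ⊢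
  tauto

lemma edge_good (hne : V.Nonempty) (htrail : W.Trail) (hturn : W.Turning) (hvis : ∀ v ∈ V, 1 ≤ W.visits v)
    (hsolid : Solid V) (ε : ZMod 2)
    (hcover : ∀ v ∈ V, ∃ p : ℤ × ℤ, EpsPixel V ε p ∧ v ∈ pixelCorners p)
    (k : ZMod W.n) :
    ∃ p : ℤ × ℤ, EpsPixel V ε p ∧ W.c k ∈ pixelCorners p ∧ W.c (k+1) ∈ pixelCorners p := by
  have hPk := Pk_eq_eps W hne htrail hturn hvis hsolid ε hcover k
  have he : s(W.c k, W.c (k+1)) ∈ W.Edges := ⟨k, rfl⟩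
  have adj := W.adj k
  rw [Pk] at hPk
  set u := W.c k with hu
  set w := W.c (k+1) with hw
  clear_value u w
  clear hu hw
  obtain ⟨a1, a2⟩ := u
  have hc1 : (a1 - 1 + 1 : ℤ) = a1 := by ring
  have hc2 : (a2 - 1 + 1 : ℤ) = a2 := by ring
  rcases gridAdj_cases adj with h | h | h | h <;> simp only at h <;> subst h
  · -- right
    rw [edgeP_eR] at hPk
    have hind : ind W (Hed a1 a2) = 1 := ind_of_mem W he
    have hflip := ind_hed_eq W hne a1 a2
    rw [hind] at hflip
    rcases zmod2_cases (F W hne a1 a2) with hF | hF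
    · have hF' : F W hne a1 (a2-1) = 1 := by
        rw [hF] at hflip
        exact ((by decide : ∀ a : ZMod 2, (1 : ZMod 2) = a + 0 → a = 1) _ hflip)
      rw [hF] at hPk
      refine ⟨(a1, a2-1), ⟨pixel_of_F W hne htrail hsolid hF', ?_⟩,
        corner_mem _ _ (by right; right; left; constructor <;> simp <;> omega),
        corner_mem _ _ (by right; right; right; constructor <;> simp <;> omega)⟩
      rw [← hPk]
      calc ((a1 + (a2-1) : ℤ) : ZMod 2) = ((a1 + a2 + 1 : ℤ) : ZMod 2) := castp (by omega)
        _ = ((a1 + a2 : ℤ) : ZMod 2) + 1 + 0 := by push_cast; ring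
    · rw [hF] at hPk
      refine ⟨(a1, a2), ⟨pixel_of_F W hne htrail hsolid hF, ?_⟩,
        corner_mem _ _ (by left; rfl),
        corner_mem _ _ (by right; left; constructor <;> simp)⟩
      rw [← hPk]
      exact (by decide : ∀ c : ZMod 2, c = c + 1 + 1) _
  · -- left
    rw [edgeP_eL] at hPk
    have hind : ind W (Hed (a1-1) a2) = 1 := by
      rw [Hed, hc1, Sym2.eq_swap]
      exact ind_of_mem W he
    have hflip := ind_hed_eq W hne (a1-1) a2
    rw [hind] at hflip
    rcases zmod2_cases (F W hne (a1-1) a2) with hF | hF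
    · have hF' : F W hne (a1-1) (a2-1) = 1 := by
        rw [hF] at hflip
        exact ((by decide : ∀ a : ZMod 2, (1 : ZMod 2) = a + 0 → a = 1) _ hflip)
      rw [hF] at hPk
      refine ⟨(a1-1, a2-1), ⟨pixel_of_F W hne htrail hsolid hF', ?_⟩,
        corner_mem _ _ (by right; right; right; constructor <;> simp <;> omega),
        corner_mem _ _ (by right; right; left; constructor <;> simp <;> omega)⟩
      rw [← hPk]
      calc (((a1-1) + (a2-1) : ℤ) : ZMod 2) = ((a1 + a2 : ℤ) : ZMod 2) := castp (by omega)
        _ = ((a1 + a2 : ℤ) : ZMod 2) + 0 := by rw [add_zero]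
    · rw [hF] at hPk
      refine ⟨(a1-1, a2), ⟨pixel_of_F W hne htrail hsolid hF, ?_⟩,
        corner_mem _ _ (by right; left; constructor <;> simp <;> omega),
        corner_mem _ _ (by left; rfl)⟩
      rw [← hPk]
      calc (((a1-1) + a2 : ℤ) : ZMod 2) = ((a1 + a2 + 1 : ℤ) : ZMod 2) := castp (by omega)
        _ = ((a1 + a2 : ℤ) : ZMod 2) + 1 := by push_cast; ring
  · -- up
    rw [edgeP_eU] at hPk
    have hind : ind W (Ved a1 a2) = 1 := ind_of_mem W he
    have hflip := ind_ved_eq W hne htrail a1 a2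
    rw [hind] at hflip
    rcases zmod2_cases (F W hne a1 a2) with hF | hF
    · have hF' : F W hne (a1-1) a2 = 1 := by
        rw [hF] at hflip
        exact ((by decide : ∀ a : ZMod 2, (1 : ZMod 2) = a + 0 → a = 1) _ hflip)
      rw [hF] at hPk
      refine ⟨(a1-1, a2), ⟨pixel_of_F W hne htrail hsolid hF', ?_⟩,
        corner_mem _ _ (by right; left; constructor <;> simp <;> omega),
        corner_mem _ _ (by right; right; right; constructor <;> simp <;> omega)⟩
      rw [← hPk]
      calc (((a1-1) + a2 : ℤ) : ZMod 2) = ((a1 + a2 + 1 : ℤ) : ZMod 2) := castp (by omega)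
        _ = ((a1 + a2 : ℤ) : ZMod 2) + 1 + 0 := by push_cast; ring
    · rw [hF] at hPk
      refine ⟨(a1, a2), ⟨pixel_of_F W hne htrail hsolid hF, ?_⟩,
        corner_mem _ _ (by left; rfl),
        corner_mem _ _ (by right; right; left; constructor <;> simp)⟩
      rw [← hPk]
      exact (by decide : ∀ c : ZMod 2, c = c + 1 + 1) _
  · -- down
    rw [edgeP_eD] at hPk
    have hind : ind W (Ved a1 (a2-1)) = 1 := by
      rw [Ved, hc2, Sym2.eq_swap]
      exact ind_of_mem W he
    have hflip := ind_ved_eq W hne htrail a1 (a2-1)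
    rw [hind] at hflip
    rcases zmod2_cases (F W hne a1 (a2-1)) with hF | hF
    · have hF' : F W hne (a1-1) (a2-1) = 1 := by
        rw [hF] at hflip
        exact ((by decide : ∀ a : ZMod 2, (1 : ZMod 2) = a + 0 → a = 1) _ hflip)
      rw [hF] at hPk
      refine ⟨(a1-1, a2-1), ⟨pixel_of_F W hne htrail hsolid hF', ?_⟩,
        corner_mem _ _ (by right; right; right; constructor <;> simp <;> omega),
        corner_mem _ _ (by right; left; constructor <;> simp <;> omega)⟩
      rw [← hPk]
      calc (((a1-1) + (a2-1) : ℤ) : ZMod 2) = ((a1 + a2 : ℤ) : ZMod 2) := castp (by omega)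
        _ = ((a1 + a2 : ℤ) : ZMod 2) + 0 := by rw [add_zero]
    · rw [hF] at hPk
      refine ⟨(a1, a2-1), ⟨pixel_of_F W hne htrail hsolid hF, ?_⟩,
        corner_mem _ _ (by right; right; left; constructor <;> simp <;> omega),
        corner_mem _ _ (by left; rfl)⟩
      rw [← hPk]
      calc ((a1 + (a2-1) : ℤ) : ZMod 2) = ((a1 + a2 + 1 : ℤ) : ZMod 2) := castp (by omega)
        _ = ((a1 + a2 : ℤ) : ZMod 2) + 1 := by push_cast; ring

lemma shared_corner_reachable (ε : ZMod 2) (A B : {p : ℤ × ℤ // EpsPixel V ε p}) (v : ℤ × ℤ)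
    (h1 : v ∈ pixelCorners A.1) (h2 : v ∈ pixelCorners B.1) :
    (checkeringGraph V ε).Reachable A B := by
  by_cases h : A = B
  · rw [h]
  · exact SimpleGraph.Adj.reachable (show A ≠ B ∧ ∃ w, w ∈ pixelCorners A.1 ∧ w ∈ pixelCorners B.1 from ⟨h, v, h1, h2⟩)

end DTHCproof


/-- If every vertex of `V` (finite nonempty solid) is a corner of some
`ε`-pixel and `G(V)` admits a double turning Hamiltonian cycle, then the `ε`-checkering
graph of `V` is connected. -/
theorem double_turning_gives_connected_checkering
    (V : Finset (ℤ × ℤ)) (hne : V.Nonempty) (hsolid : Solid V) (ε : ZMod 2)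
    (hcover : ∀ v ∈ V, ∃ p : ℤ × ℤ, EpsPixel V ε p ∧ v ∈ pixelCorners p)
    (hex : ∃ W : GridClosedWalk V, DoubleTurningHC W) :
    (checkeringGraph V ε).Connected := by

  classical
  obtain ⟨W, hvis, htrail, hturn⟩ := hex
  have hgood := fun k => DTHCproof.edge_good W hne htrail hturn hvis hsolid ε hcover k
  choose π hπ1 hπ2 hπ3 using hgood
  let PX : ZMod W.n → {p : ℤ × ℤ // EpsPixel V ε p} := fun k => ⟨π k, hπ1 k⟩
  have chain : ∀ k, (checkeringGraph V ε).Reachable (PX k) (PX (k+1)) := fun k =>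
    DTHCproof.shared_corner_reachable ε _ _ (W.c (k+1)) (hπ3 k) (hπ2 (k+1))
  have reach_add : ∀ (m : ℕ) (k : ZMod W.n),
      (checkeringGraph V ε).Reachable (PX k) (PX (k + m)) := by
    intro m
    induction m with
    | zero =>
      intro k
      have hk : (k + ((0 : ℕ) : ZMod W.n)) = k := by push_cast; ring
      rw [hk]
    | succ m ih =>
      intro k
      have hk : (k + ((m + 1 : ℕ) : ZMod W.n)) = (k + m) + 1 := by push_cast; ring
      rw [hk]
      exact (ih k).trans (chain (k + m))
  have reach_all : ∀ k k' : ZMod W.n, (checkeringGraph V ε).Reachable (PX k) (PX k') := by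
    intro k k'
    have h := reach_add ((k' - k).val) k
    have hrepr : (k + (((k' - k).val : ℕ) : ZMod W.n)) = k' := by
      rw [ZMod.natCast_val, ZMod.cast_id]
      ring
    rwa [hrepr] at h
  rw [SimpleGraph.connected_iff]
  constructor
  · intro A B
    obtain ⟨p, hpE⟩ := A
    obtain ⟨q, hqE⟩ := B
    obtain ⟨k, hk⟩ := DTHCproof.exists_index W hvis hpE.1.1
    obtain ⟨k', hk'⟩ := DTHCproof.exists_index W hvis hqE.1.1
    have h1 : (checkeringGraph V ε).Reachable ⟨p, hpE⟩ (PX k) := by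
      refine DTHCproof.shared_corner_reachable ε _ _ p (Set.mem_insert _ _) ?_
      have := hπ2 k
      rwa [hk] at this
    have h2 : (checkeringGraph V ε).Reachable ⟨q, hqE⟩ (PX k') := by
      refine DTHCproof.shared_corner_reachable ε _ _ q (Set.mem_insert _ _) ?_
      have := hπ2 k'
      rwa [hk'] at this
    exact h1.trans ((reach_all k k').trans h2.symm)
  · obtain ⟨v, hv⟩ := hne
    obtain ⟨p, hp, _⟩ := hcover v hv
    exact ⟨⟨p, hp⟩⟩
end
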